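/- arXiv:2002.03993 — 5 statements merged into one kernel-verified Lean document; each statement's English description precedes it below -/
import Mathlib

section
/- The constant function 1 is a fixed point of T, and it is the largest fixed point. Moreover, every fixed point f of T (f : [0,∞) → [0,1] with T(f) = f) other than the constant function 1 satisfies f(x) < 1 for all x ≥ 0 and is strictly increasing on [0,∞). -/
/-!
Write `g_k(z) = e^{-z} z^k / k!` (the Gamma(k+1) density) and
`H_k(y) = ∫₀^y g_k + ∫_y^∞ g_k f^k = 1 - ∫_y^∞ g_k (1 - f^k)`.
For `0 ≤ f ≤ 1`, `H_k` takes values in `[0, 1]`, is nondecreasing with `H_k(y) ≤ H_k(0) + y`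
(as `g_k ≤ 1`), and is strictly increasing once `f < 1` and `k ≥ 1`. `T f` is the
`P(· + 1)`-weighted sum of the running means `∫₀¹ H_k(t x) dt`, which inherit these monotonicity
properties. Since `P 1 < 1`, some `k₀ ≥ 1` has `P(k₀ + 1) > 0`. If a fixed point reaches `1` at
some `x`, the running mean of `H_{k₀}` equals `1` at `x`, hence `H_{k₀} = 1` on `(0, x]` and, by
the Lipschitz bound, at `0`; so `f = 1` a.e., every `H_k` is `1`, and `f = T f = 1`.
-/

open MeasureTheory Real Set Filter

noncomputable def Toper (P : ℕ → ℝ) (f : ℝ → ℝ) : ℝ → ℝ := fun x =>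
  if x = 0 then
    ∑' k : ℕ, P (k + 1) * ∫ z in Ioi (0 : ℝ),
      Real.exp (-z) * z ^ k / (Nat.factorial k : ℝ) * f z ^ k
  else
    (1 / x) * ∑' k : ℕ, P (k + 1) *
      ∫ y in Ioc (0 : ℝ) x,
        ((∫ z in Ioc (0 : ℝ) y, Real.exp (-z) * z ^ k / (Nat.factorial k : ℝ)) +
          ∫ z in Ioi y, Real.exp (-z) * z ^ k / (Nat.factorial k : ℝ) * f z ^ k)

lemma HasSum.exists_pos_of_lt {ι : Type*} [DecidableEq ι] {w : ι → ℝ} {a : ℝ} (h : HasSum w a)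
    {i : ι} (hi : w i < a) : ∃ j ≠ i, 0 < w j := by
  by_contra! hw
  have hle : ∀ j, w j ≤ if j = i then w i else 0 := fun j => by
    split_ifs with hj
    · rw [hj]
    · exact hw j hj
  exact hi.not_ge (hasSum_le hle h (hasSum_ite_eq i (w i)))

lemma hasSum_succ_of_tsum_eq {P : ℕ → ℝ} {a : ℝ} (hP0 : P 0 = 0) (hPsum : ∑' k, P k = a)
    (ha : a ≠ 0) : HasSum (fun k => P (k + 1)) a := by
  have hsum : Summable P := by
    by_contra h
    exact ha ((tsum_eq_zero_of_not_summable h).symm.trans hPsum).symm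
  simpa [hP0] using (hasSum_nat_add_iff' 1).2 (hPsum ▸ hsum.hasSum : HasSum P a)

lemma tsum_mul_lt_tsum_mul {ι : Type*} {w a b : ι → ℝ} {C : ℝ} (hw : Summable w)
    (hw0 : ∀ k, 0 ≤ w k) (ha : ∀ k, ‖a k‖ ≤ C) (hb : ∀ k, ‖b k‖ ≤ C) (hab : ∀ k, a k ≤ b k)
    {i : ι} (hi : 0 < w i) (habi : a i < b i) : ∑' k, w k * a k < ∑' k, w k * b k := by
  have summable_mul {c : ι → ℝ} (hc : ∀ k, ‖c k‖ ≤ C) : Summable fun k => w k * c k :=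
    (hw.mul_right C).of_norm_bounded fun k => by
      rw [norm_mul, Real.norm_of_nonneg (hw0 k)]
      exact mul_le_mul_of_nonneg_left (hc k) (hw0 k)
  exact Summable.tsum_lt_tsum (fun k => mul_le_mul_of_nonneg_left (hab k) (hw0 k))
    (mul_lt_mul_of_pos_left habi hi) (summable_mul ha) (summable_mul hb)

lemma eq_one_of_tsum_mul_eq_one {ι : Type*} {w a : ι → ℝ} (hw : HasSum w 1) (hw0 : ∀ k, 0 ≤ w k)
    (ha : ∀ k, ‖a k‖ ≤ 1) (h : ∑' k, w k * a k = 1) {i : ι} (hi : 0 < w i) : a i = 1 := by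
  by_contra hai
  have hlt := tsum_mul_lt_tsum_mul hw.summable hw0 ha (fun _ => norm_one.le)
    (fun k => (Real.le_norm_self _).trans (ha k)) hi
    (((Real.le_norm_self _).trans (ha i)).lt_of_ne hai)
  simp [h, hw.tsum_eq] at hlt

noncomputable def erlangDensity (k : ℕ) (z : ℝ) : ℝ :=
  Real.exp (-z) * z ^ k / (Nat.factorial k : ℝ)

section erlangDensity

variable {k : ℕ} {y z : ℝ}

lemma erlangDensity_nonneg (hz : 0 ≤ z) : 0 ≤ erlangDensity k z := by
  unfold erlangDensity; positivity

lemma erlangDensity_pos (hz : 0 < z) : 0 < erlangDensity k z := by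
  unfold erlangDensity; positivity

lemma erlangDensity_le_one (hz : 0 ≤ z) : erlangDensity k z ≤ 1 := by
  rw [erlangDensity, mul_div_assoc, exp_neg, inv_mul_le_iff₀ (exp_pos z), mul_one]
  exact pow_div_factorial_le_exp z hz k

lemma erlangDensity_eq_gammaIntegrand (k : ℕ) :
    erlangDensity k = fun z => Real.exp (-z) * z ^ ((k + 1 : ℝ) - 1) / (Nat.factorial k : ℝ) := by
  simp only [add_sub_cancel_right, Real.rpow_natCast]
  rfl

lemma integrableOn_erlangDensity (k : ℕ) : IntegrableOn (erlangDensity k) (Ioi 0) := by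
  rw [erlangDensity_eq_gammaIntegrand]
  exact (GammaIntegral_convergent (by positivity)).div_const _

lemma integral_erlangDensity (k : ℕ) : ∫ z in Ioi 0, erlangDensity k z = 1 := by
  rw [erlangDensity_eq_gammaIntegrand, integral_div, ← Gamma_eq_integral (by positivity),
    Gamma_nat_eq_factorial, div_self (by positivity)]

lemma integral_Ioc_add_integral_Ioi_erlangDensity (hy : 0 ≤ y) :
    (∫ z in Ioc 0 y, erlangDensity k z) + ∫ z in Ioi y, erlangDensity k z = 1 := by
  rw [← integral_erlangDensity k, ← Ioc_union_Ioi_eq_Ioi hy,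
    setIntegral_union Ioc_disjoint_Ioi_same measurableSet_Ioi
      ((integrableOn_erlangDensity k).mono_set Ioc_subset_Ioi_self)
      ((integrableOn_erlangDensity k).mono_set (Ioi_subset_Ioi hy))]

lemma integrableOn_erlangDensity_mul {u : ℝ → ℝ} (hu : Measurable u)
    (hu1 : ∀ z, 0 < z → ‖u z‖ ≤ 1) : IntegrableOn (fun z => erlangDensity k z * u z) (Ioi 0) :=
  (integrableOn_erlangDensity k).mul_bdd hu.aestronglyMeasurable
    ((ae_restrict_iff' measurableSet_Ioi).2 (ae_of_all _ hu1))

end erlangDensity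

noncomputable def innerIntegral (f : ℝ → ℝ) (k : ℕ) (y : ℝ) : ℝ :=
  (∫ z in Ioc 0 y, erlangDensity k z) + ∫ z in Ioi y, erlangDensity k z * f z ^ k

section innerIntegral

variable {f : ℝ → ℝ} {k : ℕ} {y y₁ y₂ : ℝ}

lemma erlangDensity_mul_one_sub_pow_mem_Icc (hf01 : ∀ x, 0 ≤ x → f x ∈ Icc (0 : ℝ) 1)
    {z : ℝ} (hz : 0 ≤ z) : erlangDensity k z * (1 - f z ^ k) ∈ Icc (0 : ℝ) 1 := by
  obtain ⟨h0, h1⟩ := hf01 z hz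
  have hg : erlangDensity k z ∈ Icc (0 : ℝ) 1 := ⟨erlangDensity_nonneg hz, erlangDensity_le_one hz⟩
  exact ⟨mul_nonneg hg.1 (sub_nonneg.2 (pow_le_one₀ h0 h1)),
    mul_le_one₀ hg.2 (sub_nonneg.2 (pow_le_one₀ h0 h1)) (by linarith [pow_nonneg h0 k])⟩

lemma innerIntegral_nonneg (hf01 : ∀ x, 0 ≤ x → f x ∈ Icc (0 : ℝ) 1) (hy : 0 ≤ y) :
    0 ≤ innerIntegral f k y :=
  add_nonneg (setIntegral_nonneg measurableSet_Ioc fun _ hz => erlangDensity_nonneg hz.1.le)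
    (setIntegral_nonneg measurableSet_Ioi fun z hz =>
      mul_nonneg (erlangDensity_nonneg (hy.trans hz.le)) (pow_nonneg (hf01 z (hy.trans hz.le)).1 k))

lemma integrableOn_erlangDensity_mul_one_sub_pow (hf : Measurable f)
    (hf01 : ∀ x, 0 ≤ x → f x ∈ Icc (0 : ℝ) 1) :
    IntegrableOn (fun z => erlangDensity k z * (1 - f z ^ k)) (Ioi 0) := by
  refine integrableOn_erlangDensity_mul (by fun_prop) fun z hz => ?_
  obtain ⟨h0, h1⟩ := hf01 z hz.le
  rw [Real.norm_of_nonneg (sub_nonneg.2 (pow_le_one₀ h0 h1))]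
  linarith [pow_nonneg h0 k]

lemma innerIntegral_eq_one_sub (hf : Measurable f) (hf01 : ∀ x, 0 ≤ x → f x ∈ Icc (0 : ℝ) 1)
    (hy : 0 ≤ y) :
    innerIntegral f k y = 1 - ∫ z in Ioi y, erlangDensity k z * (1 - f z ^ k) := by
  have hpow : IntegrableOn (fun z => erlangDensity k z * f z ^ k) (Ioi y) :=
    (integrableOn_erlangDensity_mul (by fun_prop) fun z hz => by
      obtain ⟨h0, h1⟩ := hf01 z hz.le
      rw [Real.norm_of_nonneg (pow_nonneg h0 k)]
      exact pow_le_one₀ h0 h1).mono_set (Ioi_subset_Ioi hy)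
  simp only [mul_one_sub]
  rw [integral_sub ((integrableOn_erlangDensity k).mono_set (Ioi_subset_Ioi hy)) hpow,
    ← integral_Ioc_add_integral_Ioi_erlangDensity hy, innerIntegral]
  ring

lemma innerIntegral_sub_innerIntegral (hf : Measurable f)
    (hf01 : ∀ x, 0 ≤ x → f x ∈ Icc (0 : ℝ) 1) (h₁ : 0 ≤ y₁) (h₁₂ : y₁ ≤ y₂) :
    innerIntegral f k y₂ - innerIntegral f k y₁ =
      ∫ z in Ioc y₁ y₂, erlangDensity k z * (1 - f z ^ k) := by
  have hint := integrableOn_erlangDensity_mul_one_sub_pow (k := k) hf hf01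
  rw [innerIntegral_eq_one_sub hf hf01 h₁, innerIntegral_eq_one_sub hf hf01 (h₁.trans h₁₂),
    ← Ioc_union_Ioi_eq_Ioi h₁₂, setIntegral_union Ioc_disjoint_Ioi_same measurableSet_Ioi
      (hint.mono_set (Ioc_subset_Ioi_self.trans (Ioi_subset_Ioi h₁)))
      (hint.mono_set (Ioi_subset_Ioi (h₁.trans h₁₂)))]
  ring

lemma innerIntegral_le_one (hf : Measurable f) (hf01 : ∀ x, 0 ≤ x → f x ∈ Icc (0 : ℝ) 1)
    (hy : 0 ≤ y) : innerIntegral f k y ≤ 1 := by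
  rw [innerIntegral_eq_one_sub hf hf01 hy, sub_le_self_iff]
  exact setIntegral_nonneg measurableSet_Ioi fun z hz =>
    (erlangDensity_mul_one_sub_pow_mem_Icc hf01 (hy.trans hz.le)).1

lemma monotoneOn_innerIntegral (hf : Measurable f) (hf01 : ∀ x, 0 ≤ x → f x ∈ Icc (0 : ℝ) 1) :
    MonotoneOn (innerIntegral f k) (Ici 0) := fun y₁ h₁ y₂ _ h₁₂ => by
  rw [← sub_nonneg, innerIntegral_sub_innerIntegral hf hf01 h₁ h₁₂]
  exact setIntegral_nonneg measurableSet_Ioc fun z hz =>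
    (erlangDensity_mul_one_sub_pow_mem_Icc hf01 (le_trans h₁ hz.1.le)).1

lemma innerIntegral_le_innerIntegral_zero_add (hf : Measurable f)
    (hf01 : ∀ x, 0 ≤ x → f x ∈ Icc (0 : ℝ) 1) (hy : 0 ≤ y) :
    innerIntegral f k y ≤ innerIntegral f k 0 + y := by
  rw [← sub_le_iff_le_add', innerIntegral_sub_innerIntegral hf hf01 le_rfl hy]
  refine (Real.le_norm_self _).trans ((norm_setIntegral_le_of_norm_le_const measure_Ioc_lt_top
    fun z hz => ?_).trans_eq (by rw [volume_real_Ioc_of_le hy, one_mul, sub_zero]))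
  obtain ⟨h0, h1⟩ := erlangDensity_mul_one_sub_pow_mem_Icc (k := k) hf01 hz.1.le
  rwa [Real.norm_of_nonneg h0]

lemma strictMonoOn_innerIntegral (hf : Measurable f) (hf01 : ∀ x, 0 ≤ x → f x ∈ Icc (0 : ℝ) 1)
    (hlt : ∀ x, 0 ≤ x → f x < 1) (hk : k ≠ 0) : StrictMonoOn (innerIntegral f k) (Ici 0) :=
  fun y₁ h₁ y₂ _ h₁₂ => by
  rw [← sub_pos, innerIntegral_sub_innerIntegral hf hf01 h₁ h₁₂.le,
    ← intervalIntegral.integral_of_le h₁₂.le]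
  have hint := (integrableOn_erlangDensity_mul_one_sub_pow (k := k) hf hf01).mono_set
    (Ioc_subset_Ioi_self.trans (Ioi_subset_Ioi h₁) : Ioc y₁ y₂ ⊆ Ioi 0)
  refine intervalIntegral.intervalIntegral_pos_of_pos_on
    ((intervalIntegrable_iff_integrableOn_Ioc_of_le h₁₂.le).2 hint) (fun z hz => ?_) h₁₂
  have hz0 : 0 < z := lt_of_le_of_lt h₁ hz.1
  exact mul_pos (erlangDensity_pos hz0)
    (sub_pos.2 (pow_lt_one₀ (hf01 z hz0.le).1 (hlt z hz0.le) hk))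

lemma ae_eq_one_of_innerIntegral_zero_eq_one (hf : Measurable f)
    (hf01 : ∀ x, 0 ≤ x → f x ∈ Icc (0 : ℝ) 1) (hk : k ≠ 0) (h : innerIntegral f k 0 = 1) :
    f =ᵐ[volume.restrict (Ioi 0)] 1 := by
  rw [innerIntegral_eq_one_sub hf hf01 le_rfl, sub_eq_self,
    setIntegral_eq_zero_iff_of_nonneg_ae ((ae_restrict_iff' measurableSet_Ioi).2
      (ae_of_all _ fun z hz => (erlangDensity_mul_one_sub_pow_mem_Icc hf01 hz.le).1))
      (integrableOn_erlangDensity_mul_one_sub_pow hf hf01)] at h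
  filter_upwards [h, ae_restrict_mem measurableSet_Ioi] with z hz hz0
  have hfk : f z ^ k = 1 := by
    have : 1 - f z ^ k = 0 := by simpa [(erlangDensity_pos hz0).ne'] using hz
    linarith
  exact (pow_eq_one_iff_of_nonneg (hf01 z (le_of_lt hz0)).1 hk).1 hfk

lemma innerIntegral_eq_one_of_ae_eq_one (h : f =ᵐ[volume.restrict (Ioi 0)] 1) (hy : 0 ≤ y) :
    innerIntegral f k y = 1 := by
  have hIoi : ∫ z in Ioi y, erlangDensity k z * f z ^ k = ∫ z in Ioi y, erlangDensity k z := by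
    refine integral_congr_ae ?_
    filter_upwards [ae_restrict_of_ae_restrict_of_subset (Ioi_subset_Ioi hy) h] with z hz
    simp [hz]
  rw [innerIntegral, hIoi, integral_Ioc_add_integral_Ioi_erlangDensity hy]

end innerIntegral

/-- `(1 / x) * ∫ y in 0..x, H y`, written so that its value at `x = 0` is `H 0`, as in `Toper`. -/
noncomputable def runningMean (H : ℝ → ℝ) (x : ℝ) : ℝ := ∫ t in (0 : ℝ)..1, H (t * x)

section runningMean

variable {H : ℝ → ℝ} {x : ℝ}

lemma runningMean_zero (H : ℝ → ℝ) : runningMean H 0 = H 0 := by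
  simp [runningMean]

lemma runningMean_of_pos (H : ℝ → ℝ) (hx : 0 < x) :
    runningMean H x = x⁻¹ * ∫ y in Ioc 0 x, H y := by
  rw [runningMean, intervalIntegral.integral_comp_mul_right H hx.ne', zero_mul, one_mul,
    intervalIntegral.integral_of_le hx.le, smul_eq_mul]

lemma runningMean_eq_of_eqOn {c : ℝ} (hH : ∀ y, 0 ≤ y → H y = c) (hx : 0 ≤ x) :
    runningMean H x = c := by
  rw [runningMean, intervalIntegral.integral_congr (g := fun _ => c) fun t ht =>
    hH _ (mul_nonneg (by simpa using ht.1) hx)]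
  simp

lemma MonotoneOn.intervalIntegrable_comp_mul (hH : MonotoneOn H (Ici 0)) (hx : 0 ≤ x)
    {a b : ℝ} (ha : 0 ≤ a) (hab : a ≤ b) : IntervalIntegrable (fun t => H (t * x)) volume a b := by
  refine MonotoneOn.intervalIntegrable fun s hs t ht hst => hH ?_ ?_ ?_
  all_goals simp only [uIcc_of_le hab, mem_Icc, mem_Ici] at *
  · exact mul_nonneg (ha.trans hs.1) hx
  · exact mul_nonneg (ha.trans ht.1) hx
  · exact mul_le_mul_of_nonneg_right hst hx

lemma runningMean_mem_Icc (hH : MonotoneOn H (Ici 0)) (hx : 0 ≤ x) :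
    runningMean H x ∈ Icc (H 0) (H x) := by
  have hint := hH.intervalIntegrable_comp_mul hx le_rfl zero_le_one
  have hmem : ∀ t ∈ Icc (0 : ℝ) 1, t * x ∈ Ici 0 := fun t ht => mul_nonneg ht.1 hx
  constructor
  · calc H 0 = ∫ _ in (0 : ℝ)..1, H 0 := by simp
      _ ≤ runningMean H x := intervalIntegral.integral_mono_on zero_le_one intervalIntegrable_const
          hint fun t ht => hH (mem_Ici.2 le_rfl) (hmem t ht) (hmem t ht)
  · calc runningMean H x ≤ ∫ _ in (0 : ℝ)..1, H x :=
          intervalIntegral.integral_mono_on zero_le_one hint intervalIntegrable_const fun t ht =>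
            hH (hmem t ht) hx (mul_le_of_le_one_left hx ht.2)
      _ = H x := by simp

lemma MonotoneOn.runningMean (hH : MonotoneOn H (Ici 0)) :
    MonotoneOn (runningMean H) (Ici 0) := fun _ h₁ _ h₂ h₁₂ =>
  intervalIntegral.integral_mono_on zero_le_one
    (hH.intervalIntegrable_comp_mul h₁ le_rfl zero_le_one)
    (hH.intervalIntegrable_comp_mul h₂ le_rfl zero_le_one) fun _ ht =>
      hH (mul_nonneg ht.1 h₁) (mul_nonneg ht.1 h₂) (mul_le_mul_of_nonneg_left h₁₂ ht.1)

lemma StrictMonoOn.runningMean (hH : StrictMonoOn H (Ici 0)) :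
    StrictMonoOn (runningMean H) (Ici 0) := fun x₁ h₁ x₂ h₂ h₁₂ => by
  rw [← sub_pos, _root_.runningMean, _root_.runningMean, ← intervalIntegral.integral_sub
    (hH.monotoneOn.intervalIntegrable_comp_mul h₂ le_rfl zero_le_one)
    (hH.monotoneOn.intervalIntegrable_comp_mul h₁ le_rfl zero_le_one)]
  refine intervalIntegral.intervalIntegral_pos_of_pos_on
    ((hH.monotoneOn.intervalIntegrable_comp_mul h₂ le_rfl zero_le_one).sub
      (hH.monotoneOn.intervalIntegrable_comp_mul h₁ le_rfl zero_le_one))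
    (fun t ht => ?_) zero_lt_one
  exact sub_pos.2 (hH (mul_nonneg ht.1.le h₁) (mul_nonneg ht.1.le h₂)
    (mul_lt_mul_of_pos_left h₁₂ ht.1))

lemma le_of_runningMean_eq (hH : MonotoneOn H (Ici 0)) {c : ℝ} (hc : ∀ y, 0 ≤ y → H y ≤ c)
    (hx : 0 ≤ x) (hmean : runningMean H x = c) {s : ℝ} (hs : 0 < s) (hs1 : s ≤ 1) :
    c ≤ H (s * x) := by
  have hsx : s * x ∈ Ici 0 := mul_nonneg hs.le hx
  have hlow : ∫ t in (0 : ℝ)..s, H (t * x) ≤ s * H (s * x) := by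
    calc ∫ t in (0 : ℝ)..s, H (t * x) ≤ ∫ _ in (0 : ℝ)..s, H (s * x) :=
          intervalIntegral.integral_mono_on hs.le (hH.intervalIntegrable_comp_mul hx le_rfl hs.le)
            intervalIntegrable_const fun t ht =>
              hH (mul_nonneg ht.1 hx) hsx (mul_le_mul_of_nonneg_right ht.2 hx)
      _ = s * H (s * x) := by simp
  have hhigh : ∫ t in s..1, H (t * x) ≤ (1 - s) * c := by
    calc ∫ t in s..1, H (t * x) ≤ ∫ _ in s..1, c :=
          intervalIntegral.integral_mono_on hs1 (hH.intervalIntegrable_comp_mul hx hs.le hs1)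
            intervalIntegrable_const fun t ht => hc _ (mul_nonneg (hs.le.trans ht.1) hx)
      _ = (1 - s) * c := by simp
  rw [runningMean, ← intervalIntegral.integral_add_adjacent_intervals
    (hH.intervalIntegrable_comp_mul hx le_rfl hs.le)
    (hH.intervalIntegrable_comp_mul hx hs.le hs1)] at hmean
  nlinarith

lemma eq_of_runningMean_eq (hH : MonotoneOn H (Ici 0)) {c : ℝ} (hc : ∀ y, 0 ≤ y → H y ≤ c)
    (hH0 : ∀ y, 0 ≤ y → H y ≤ H 0 + y) (hx : 0 ≤ x) (hmean : runningMean H x = c) : H 0 = c := by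
  obtain rfl | hx := hx.eq_or_lt
  · rwa [runningMean_zero] at hmean
  refine le_antisymm (hc 0 le_rfl) (le_of_forall_pos_lt_add fun ε hε => ?_)
  set s := min 1 (ε / (2 * x))
  have hs : 0 < s := lt_min one_pos (by positivity)
  calc c ≤ H (s * x) := le_of_runningMean_eq hH hc hx.le hmean hs (min_le_left _ _)
    _ ≤ H 0 + s * x := hH0 _ (by positivity)
    _ ≤ H 0 + ε / 2 := by
        gcongr
        calc s * x ≤ ε / (2 * x) * x := by gcongr; exact min_le_right _ _
          _ = ε / 2 := by field_simp
    _ < H 0 + ε := by linarith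

end runningMean

lemma innerIntegral_zero_eq_one_of_runningMean_eq_one {f : ℝ → ℝ} (hf : Measurable f)
    (hf01 : ∀ x, 0 ≤ x → f x ∈ Icc (0 : ℝ) 1) {k : ℕ} {x : ℝ} (hx : 0 ≤ x)
    (h : runningMean (innerIntegral f k) x = 1) : innerIntegral f k 0 = 1 :=
  eq_of_runningMean_eq (monotoneOn_innerIntegral hf hf01) (fun _ => innerIntegral_le_one hf hf01)
    (fun _ => innerIntegral_le_innerIntegral_zero_add hf hf01) hx h

lemma norm_runningMean_innerIntegral_le_one {f : ℝ → ℝ} (hf : Measurable f)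
    (hf01 : ∀ x, 0 ≤ x → f x ∈ Icc (0 : ℝ) 1) (k : ℕ) {x : ℝ} (hx : 0 ≤ x) :
    ‖runningMean (innerIntegral f k) x‖ ≤ 1 := by
  obtain ⟨hlow, hhigh⟩ := runningMean_mem_Icc (monotoneOn_innerIntegral (k := k) hf hf01) hx
  rw [Real.norm_of_nonneg ((innerIntegral_nonneg hf01 le_rfl).trans hlow)]
  exact hhigh.trans (innerIntegral_le_one hf hf01 hx)

lemma Toper_eq_tsum (P : ℕ → ℝ) (f : ℝ → ℝ) {x : ℝ} (hx : 0 ≤ x) :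
    Toper P f x = ∑' k, P (k + 1) * runningMean (innerIntegral f k) x := by
  obtain rfl | hx := hx.eq_or_lt
  · simp [Toper, runningMean_zero, innerIntegral, erlangDensity]
  rw [Toper, if_neg hx.ne', ← tsum_mul_left]
  congr 1 with k
  rw [runningMean_of_pos _ hx]
  simp only [innerIntegral, erlangDensity]
  ring

lemma Toper_eq_one_of_ae_eq_one {P : ℕ → ℝ} (hP : HasSum (fun k => P (k + 1)) 1) {f : ℝ → ℝ}
    (hf : f =ᵐ[volume.restrict (Ioi 0)] 1) {x : ℝ} (hx : 0 ≤ x) : Toper P f x = 1 := by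
  simp_rw [Toper_eq_tsum P f hx, runningMean_eq_of_eqOn
    (fun y hy => innerIntegral_eq_one_of_ae_eq_one hf hy) hx, mul_one]
  exact hP.tsum_eq

theorem stmt_1_general (P : ℕ → ℝ)
    (hP0 : P 0 = 0) (hPnonneg : ∀ k, 0 ≤ P k) (hPsum : ∑' k, P k = 1)
    (hP1 : P 1 < 1) :
    (∀ x, 0 ≤ x → Toper P (fun _ => 1) x = 1) ∧
    (∀ f : ℝ → ℝ, Measurable f → (∀ x, 0 ≤ x → f x ∈ Icc (0 : ℝ) 1) →
      (∀ x, 0 ≤ x → Toper P f x = f x) →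
      (∀ x, 0 ≤ x → f x ≤ 1) ∧
      (¬ (∀ x, 0 ≤ x → f x = 1) →
        (∀ x, 0 ≤ x → f x < 1) ∧ StrictMonoOn f (Ici 0))) := by
  have hP := hasSum_succ_of_tsum_eq hP0 hPsum one_ne_zero
  obtain ⟨k₀, hk₀, hPk₀⟩ := hP.exists_pos_of_lt (i := 0) (by simpa using hP1)
  refine ⟨fun x => Toper_eq_one_of_ae_eq_one hP (by rfl), fun f hf hf01 hfix =>
    ⟨fun x hx => (hf01 x hx).2, fun hne => ?_⟩⟩
  have hfA {x : ℝ} (hx : 0 ≤ x) : f x = ∑' k, P (k + 1) * runningMean (innerIntegral f k) x :=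
    (hfix x hx).symm.trans (Toper_eq_tsum P f hx)
  have hlt (x : ℝ) (hx : 0 ≤ x) : f x < 1 := by
    refine (hf01 x hx).2.lt_of_ne fun hx1 => hne fun y hy => (hfix y hy).symm.trans
      (Toper_eq_one_of_ae_eq_one hP (ae_eq_one_of_innerIntegral_zero_eq_one hf hf01 hk₀ ?_) hy)
    refine innerIntegral_zero_eq_one_of_runningMean_eq_one hf hf01 hx ?_
    exact eq_one_of_tsum_mul_eq_one hP (fun _ => hPnonneg _)
      (fun k => norm_runningMean_innerIntegral_le_one hf hf01 k hx) ((hfA hx).symm.trans hx1) hPk₀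
  refine ⟨hlt, fun x₁ hx₁ x₂ hx₂ h₁₂ => ?_⟩
  rw [hfA hx₁, hfA hx₂]
  exact tsum_mul_lt_tsum_mul hP.summable (fun _ => hPnonneg _)
    (fun k => norm_runningMean_innerIntegral_le_one hf hf01 k hx₁)
    (fun k => norm_runningMean_innerIntegral_le_one hf hf01 k hx₂)
    (fun k => (monotoneOn_innerIntegral hf hf01).runningMean hx₁ hx₂ h₁₂.le) hPk₀
    ((strictMonoOn_innerIntegral hf hf01 hlt hk₀).runningMean hx₁ hx₂ h₁₂)

theorem stmt_1 (P : ℕ → ℝ)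
    (hP0 : P 0 = 0) (hPnonneg : ∀ k, 0 ≤ P k) (hPsum : ∑' k, P k = 1)
    (hPmean : Summable fun k : ℕ => (k : ℝ) * P k) (hP1 : P 1 < 1) :
    (∀ x, 0 ≤ x → Toper P (fun _ => 1) x = 1) ∧
    (∀ f : ℝ → ℝ, Measurable f → (∀ x, 0 ≤ x → f x ∈ Icc (0 : ℝ) 1) →
      (∀ x, 0 ≤ x → Toper P f x = f x) →
      (∀ x, 0 ≤ x → f x ≤ 1) ∧
      (¬ (∀ x, 0 ≤ x → f x = 1) →
        (∀ x, 0 ≤ x → f x < 1) ∧ StrictMonoOn f (Ici 0))) :=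
  stmt_1_general P hP0 hPnonneg hPsum hP1
end

section
/- Suppose there exists x₀ > 0 such that ∫_0^{x₀} z·g₂(z) dz > 1 and, for every x ∈ (0, x₀], ∫_0^{x₀} z·(min(x,z)/x)·g₂(z) dz > 1. Then there exists ε ∈ (0,1) such that the smallest fixed point q of T (the pointwise limit of T^l(0)) satisfies q(x) ≤ 1 − ε for all x ∈ [0, x₀]; in particular q is not identically equal to 1. -/
open MeasureTheory Real Set Filter

/-- `g₂(x) = e^{-x} ∑_{k≥2} P(k) x^{k-2}/(k-2)!`. -/
noncomputable def g2 (P : ℕ → ℝ) (x : ℝ) : ℝ :=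
  Real.exp (-x) * ∑' k : ℕ, P (k + 2) * x ^ k / (Nat.factorial k : ℝ)

/-!
For `a < 1` close to `1`, the set of `f` with `0 ≤ f ≤ 1` and `f ≤ a` on `(-∞, x₀]` is mapped into
itself by `T`, so it contains every iterate `T^l 0` and hence `q`. Write `Φ_k` for the distribution
function of the Erlang density `e^{-z} z^k / k!` and `D_k(x) = ∫_0^x (Φ_k(x₀) - Φ_k(y)) dy`. For
`0 ≤ y ≤ x₀` the bracket in `T f` is at most `1 - (1 - a^k)(Φ_k(x₀) - Φ_k(y))`, hence
`T f (x) ≤ 1 - x⁻¹ ∑ P(k+1) (1 - a^k) D_k(x)` on `(0, x₀]` (and similarly at `0`). Since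
`1 - a^k ≥ k (1 - a) a^k` and `D_k(x) / x ≥ D_k(x₀) / x₀` (averages of a decreasing function), it
suffices that `∑ P(k+1) k D_k(x₀) > x₀`. Integrating by parts,
`k D_k(x₀) = ∫_0^{x₀} z² e^{-z} z^{k-1} / (k-1)! dz`, so this sum is `∫_0^{x₀} z² g₂(z) dz`, which exceeds `x₀` by the hypothesis at `x = x₀`.
-/

theorem AntitoneOn.sub_mul_intervalIntegral_le {h : ℝ → ℝ} {a x b : ℝ} (hax : a ≤ x) (hxb : x ≤ b)
    (hh : AntitoneOn h (Icc a b)) :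
    (x - a) * ∫ y in a..b, h y ≤ (b - a) * ∫ y in a..x, h y := by
  have hint : ∀ {c d}, a ≤ c → c ≤ d → d ≤ b → IntervalIntegrable h volume c d :=
    fun hac hcd hdb =>
      (hh.mono (by rw [uIcc_of_le hcd]; exact Icc_subset_Icc hac hdb)).intervalIntegrable
  have hleft : (x - a) * h x ≤ ∫ y in a..x, h y := by
    simpa using intervalIntegral.integral_mono_on hax intervalIntegrable_const
      (hint le_rfl hax hxb) (fun y hy => hh ⟨hy.1, hy.2.trans hxb⟩ ⟨hax, hxb⟩ hy.2)
  have hright : ∫ y in x..b, h y ≤ (b - x) * h x := by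
    simpa using intervalIntegral.integral_mono_on hxb (hint hax hxb le_rfl)
      intervalIntegrable_const (fun y hy => hh ⟨hax, hxb⟩ ⟨hax.trans hy.1, hy.2⟩ hy.1)
  rw [← intervalIntegral.integral_add_adjacent_intervals (hint le_rfl hax hxb)
    (hint hax hxb le_rfl)]
  linarith [mul_le_mul_of_nonneg_left hright (sub_nonneg.2 hax),
    mul_le_mul_of_nonneg_left hleft (sub_nonneg.2 hxb)]

theorem tsum_mul_add_sum_mul_le {w u d : ℕ → ℝ} {c : ℝ} (hw : HasSum w 1) (hw0 : ∀ k, 0 ≤ w k)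
    (hu0 : ∀ k, 0 ≤ u k) (hd0 : ∀ k, 0 ≤ d k) (hud : ∀ k, u k + d k ≤ c) (s : Finset ℕ) :
    ∑' k, w k * u k + ∑ k ∈ s, w k * d k ≤ c := by
  have hwc : Summable fun k => w k * c := hw.summable.mul_right c
  have hwu : Summable fun k => w k * u k := hwc.of_nonneg_of_le
    (fun k => mul_nonneg (hw0 k) (hu0 k))
    (fun k => mul_le_mul_of_nonneg_left (by linarith [hud k, hd0 k]) (hw0 k))
  have hwd : Summable fun k => w k * d k := hwc.of_nonneg_of_le
    (fun k => mul_nonneg (hw0 k) (hd0 k))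
    (fun k => mul_le_mul_of_nonneg_left (by linarith [hud k, hu0 k]) (hw0 k))
  calc ∑' k, w k * u k + ∑ k ∈ s, w k * d k ≤ ∑' k, w k * u k + ∑' k, w k * d k := by
        gcongr; exact hwd.sum_le_tsum s fun k _ => mul_nonneg (hw0 k) (hd0 k)
    _ = ∑' k, (w k * u k + w k * d k) := (hwu.tsum_add hwd).symm
    _ ≤ ∑' k, w k * c := (hwu.add hwd).tsum_le_tsum
        (fun k => by rw [← mul_add]; exact mul_le_mul_of_nonneg_left (hud k) (hw0 k)) hwc
    _ = c := by rw [tsum_mul_right, hw.tsum_eq, one_mul]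

theorem mul_one_sub_mul_pow_le {a : ℝ} (ha0 : 0 ≤ a) (ha1 : a ≤ 1) (k : ℕ) :
    k * (1 - a) * a ^ k ≤ 1 - a ^ k := by
  rw [← mul_neg_geom_sum, mul_comm (k : ℝ), mul_assoc]
  refine mul_le_mul_of_nonneg_left ?_ (sub_nonneg.2 ha1)
  simpa using Finset.card_nsmul_le_sum (Finset.range k) (fun i => a ^ i) (a ^ k)
    fun i hi => pow_le_pow_of_le_one ha0 ha1 (Finset.mem_range.1 hi).le

namespace Toper

noncomputable def erlang (k : ℕ) (z : ℝ) : ℝ := Real.exp (-z) * z ^ k / (Nat.factorial k : ℝ)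

@[fun_prop]
theorem continuous_erlang (k : ℕ) : Continuous (erlang k) := by
  unfold erlang; fun_prop

theorem erlang_nonneg (k : ℕ) {z : ℝ} (hz : 0 ≤ z) : 0 ≤ erlang k z := by
  unfold erlang; positivity

theorem succ_mul_erlang_succ (k : ℕ) (z : ℝ) : (k + 1) * erlang (k + 1) z = z * erlang k z := by
  unfold erlang
  rw [Nat.factorial_succ, pow_succ]
  push_cast
  field_simp

theorem integrableOn_erlang (k : ℕ) : IntegrableOn (erlang k) (Ioi 0) := by
  refine ((Real.GammaIntegral_convergent (s := k + 1) (by positivity)).congr_fun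
    (fun z _ => ?_) measurableSet_Ioi).div_const _
  simp only [add_sub_cancel_right, Real.rpow_natCast]

theorem integral_erlang (k : ℕ) : ∫ z in Ioi 0, erlang k z = 1 := by
  have hGamma : ∫ z in Ioi (0 : ℝ), Real.exp (-z) * z ^ k = Real.Gamma (k + 1) := by
    rw [Real.Gamma_eq_integral (by positivity)]
    refine setIntegral_congr_fun measurableSet_Ioi fun z _ => ?_
    rw [add_sub_cancel_right, Real.rpow_natCast]
  simp only [erlang]
  rw [integral_div, hGamma, Real.Gamma_nat_eq_factorial, div_self (by positivity)]

theorem erlang_le {k : ℕ} {z c : ℝ} (hz : 0 ≤ z) (hzc : z ≤ c) :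
    erlang k z ≤ c ^ k / (Nat.factorial k : ℝ) := by
  unfold erlang
  gcongr
  calc Real.exp (-z) * z ^ k ≤ 1 * z ^ k := by
        gcongr; exact Real.exp_le_one_iff.2 (neg_nonpos.2 hz)
    _ ≤ c ^ k := by rw [one_mul]; gcongr

noncomputable def erlangCDF (k : ℕ) (t : ℝ) : ℝ := ∫ z in (0)..t, erlang k z

theorem erlangCDF_add_integral_Ioi (k : ℕ) {t : ℝ} (ht : 0 ≤ t) :
    erlangCDF k t + ∫ z in Ioi t, erlang k z = 1 := by
  rw [erlangCDF, intervalIntegral.integral_interval_add_Ioi (integrableOn_erlang k)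
    ((integrableOn_erlang k).mono_set (Ioi_subset_Ioi ht)), integral_erlang]

theorem erlangCDF_nonneg (k : ℕ) {t : ℝ} (ht : 0 ≤ t) : 0 ≤ erlangCDF k t :=
  intervalIntegral.integral_nonneg ht fun _ hz => erlang_nonneg k hz.1

theorem monotoneOn_erlangCDF (k : ℕ) : MonotoneOn (erlangCDF k) (Ici 0) := by
  intro s hs t _ hst
  have hint : ∀ u v, IntervalIntegrable (erlang k) volume u v :=
    fun u v => (continuous_erlang k).intervalIntegrable u v
  rw [erlangCDF, erlangCDF, ← intervalIntegral.integral_add_adjacent_intervals (hint 0 s)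
    (hint s t), le_add_iff_nonneg_right]
  exact intervalIntegral.integral_nonneg hst fun z hz => erlang_nonneg k ((mem_Ici.1 hs).trans hz.1)

theorem hasDerivAt_erlangCDF (k : ℕ) (t : ℝ) : HasDerivAt (erlangCDF k) (erlang k t) t :=
  ((continuous_erlang k).integral_hasStrictDerivAt 0 t).hasDerivAt

@[fun_prop]
theorem continuous_erlangCDF (k : ℕ) : Continuous (erlangCDF k) :=
  continuous_iff_continuousAt.2 fun t => (hasDerivAt_erlangCDF k t).continuousAt

noncomputable def deficit (x₀ : ℝ) (k : ℕ) (x : ℝ) : ℝ :=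
  ∫ y in (0)..x, (erlangCDF k x₀ - erlangCDF k y)

theorem deficit_self (x₀ : ℝ) (k : ℕ) : deficit x₀ k x₀ = ∫ z in (0)..x₀, z * erlang k z := by
  have hparts := intervalIntegral.integral_mul_deriv_eq_deriv_mul (a := 0) (b := x₀)
    (fun t _ => hasDerivAt_erlangCDF k t) (fun t _ => hasDerivAt_id t)
    ((continuous_erlang k).intervalIntegrable _ _) intervalIntegrable_const
  simp only [mul_one, id, mul_zero, sub_zero] at hparts
  rw [deficit, intervalIntegral.integral_sub intervalIntegrable_const
    ((continuous_erlangCDF k).intervalIntegrable _ _), hparts, intervalIntegral.integral_const,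
    smul_eq_mul]
  simp only [sub_zero, mul_comm (erlang k _)]
  ring

theorem succ_mul_deficit_self (x₀ : ℝ) (j : ℕ) :
    ((j : ℝ) + 1) * deficit x₀ (j + 1) x₀ = ∫ z in (0)..x₀, z ^ 2 * erlang j z := by
  rw [deficit_self, ← intervalIntegral.integral_const_mul]
  congr 1
  ext z
  rw [mul_left_comm, succ_mul_erlang_succ, sq, mul_assoc]

theorem deficit_nonneg (k : ℕ) {x x₀ : ℝ} (hx : 0 ≤ x) (hxx₀ : x ≤ x₀) : 0 ≤ deficit x₀ k x :=
  intervalIntegral.integral_nonneg hx fun _ hy =>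
    sub_nonneg.2 (monotoneOn_erlangCDF k hy.1 (hx.trans hxx₀) (hy.2.trans hxx₀))

theorem deficit_le_mul_erlangCDF (k : ℕ) {x₀ : ℝ} (hx₀ : 0 ≤ x₀) :
    deficit x₀ k x₀ ≤ x₀ * erlangCDF k x₀ := by
  simpa [deficit] using intervalIntegral.integral_mono_on (μ := volume) hx₀
    ((continuous_const.sub (continuous_erlangCDF k)).intervalIntegrable _ _)
    intervalIntegrable_const fun y hy => sub_le_self _ (erlangCDF_nonneg k hy.1)

theorem mul_deficit_le (k : ℕ) {x x₀ : ℝ} (hx : 0 ≤ x) (hxx₀ : x ≤ x₀) :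
    x * deficit x₀ k x₀ ≤ x₀ * deficit x₀ k x := by
  simpa [deficit] using AntitoneOn.sub_mul_intervalIntegral_le hx hxx₀
    (h := fun y => erlangCDF k x₀ - erlangCDF k y)
    fun s hs t ht hst => sub_le_sub_left (monotoneOn_erlangCDF k hs.1 ht.1 hst) _

noncomputable def psi (f : ℝ → ℝ) (k : ℕ) (y : ℝ) : ℝ :=
  (∫ z in Ioc 0 y, erlang k z) + ∫ z in Ioi y, erlang k z * f z ^ k

structure BelowBarrier (x₀ a : ℝ) (f : ℝ → ℝ) : Prop where
  nonneg : ∀ z, 0 ≤ f z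
  le_one : ∀ z, f z ≤ 1
  le_of_le : ∀ z ≤ x₀, f z ≤ a

theorem BelowBarrier.barrier_nonneg {x₀ a : ℝ} {f : ℝ → ℝ} (hf : BelowBarrier x₀ a f) : 0 ≤ a :=
  (hf.nonneg x₀).trans (hf.le_of_le x₀ le_rfl)

theorem psi_nonneg {f : ℝ → ℝ} (hf : ∀ z, 0 ≤ f z) (k : ℕ) {y : ℝ} (hy : 0 ≤ y) :
    0 ≤ psi f k y :=
  add_nonneg (setIntegral_nonneg measurableSet_Ioc fun _ hz => erlang_nonneg k hz.1.le)
    (setIntegral_nonneg measurableSet_Ioi fun z hz =>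
      mul_nonneg (erlang_nonneg k (hy.trans (le_of_lt hz))) (pow_nonneg (hf z) k))

theorem psi_le {x₀ a : ℝ} {f : ℝ → ℝ} (hf : BelowBarrier x₀ a f) (k : ℕ) {y : ℝ} (hy : 0 ≤ y)
    (hyx₀ : y ≤ x₀) : psi f k y ≤ 1 - (1 - a ^ k) * (erlangCDF k x₀ - erlangCDF k y) := by
  have ha0 : 0 ≤ a := hf.barrier_nonneg
  -- Comparing with the integrable majorant `G` needs no measurability of `f`.
  set G : ℝ → ℝ := fun z => erlang k z * if z ≤ x₀ then a ^ k else 1 with hG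
  have hGint : IntegrableOn G (Ioi y) :=
    ((integrableOn_erlang k).mono_set (Ioi_subset_Ioi hy)).mul_bdd (c := a ^ k + 1)
      (Measurable.ite measurableSet_Iic measurable_const measurable_const).aestronglyMeasurable
      (ae_of_all _ fun z => by
        split_ifs <;> simp only [norm_pow, Real.norm_eq_abs, abs_of_nonneg ha0, norm_one] <;>
          linarith [pow_nonneg ha0 k])
  have hfG : ∫ z in Ioi y, erlang k z * f z ^ k ≤ ∫ z in Ioi y, G z := by
    refine integral_mono_of_nonneg ?_ hGint ((ae_restrict_iff' measurableSet_Ioi).2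
      (ae_of_all _ fun z hz => mul_le_mul_of_nonneg_left ?_ (erlang_nonneg k (hy.trans hz.le))))
    · exact (ae_restrict_iff' measurableSet_Ioi).2 (ae_of_all _ fun z hz =>
        mul_nonneg (erlang_nonneg k (hy.trans hz.le)) (pow_nonneg (hf.nonneg z) k))
    · split_ifs with hz
      exacts [pow_le_pow_left₀ (hf.nonneg z) (hf.le_of_le z hz) k,
        pow_le_one₀ (hf.nonneg z) (hf.le_one z)]
  have hGmid : ∫ z in y..x₀, G z = a ^ k * (erlangCDF k x₀ - erlangCDF k y) := by
    rw [intervalIntegral.integral_congr (g := fun z => a ^ k * erlang k z) fun z hz => by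
        simp [hG, if_pos (uIcc_of_le hyx₀ ▸ hz).2, mul_comm],
      intervalIntegral.integral_const_mul, erlangCDF, erlangCDF,
      intervalIntegral.integral_interval_sub_left ((continuous_erlang k).intervalIntegrable _ _)
        ((continuous_erlang k).intervalIntegrable _ _)]
  have hGtail : ∫ z in Ioi x₀, G z = ∫ z in Ioi x₀, erlang k z :=
    setIntegral_congr_fun measurableSet_Ioi fun z hz => by simp [hG, not_le.2 (mem_Ioi.1 hz)]
  have hsplit := intervalIntegral.integral_interval_add_Ioi hGint
    (hGint.mono_set (Ioi_subset_Ioi hyx₀))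
  have hCDF : ∫ z in Ioc 0 y, erlang k z = erlangCDF k y :=
    (intervalIntegral.integral_of_le hy).symm
  have := erlangCDF_add_integral_Ioi k (hy.trans hyx₀)
  rw [psi, hCDF]
  linarith

section Operator

variable (P : ℕ → ℝ) (f : ℝ → ℝ)

theorem apply_of_ne {x : ℝ} (hx : x ≠ 0) :
    Toper P f x = 1 / x * ∑' k, P (k + 1) * ∫ y in Ioc 0 x, psi f k y := by
  simp only [Toper, if_neg hx]; rfl

theorem apply_zero : Toper P f 0 = ∑' k, P (k + 1) * psi f k 0 := by
  simp [Toper, psi, erlang]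

theorem apply_of_neg {x : ℝ} (hx : x < 0) : Toper P f x = 0 := by
  simp [apply_of_ne P f hx.ne, Ioc_eq_empty (not_lt.2 hx.le)]

variable {P f}

theorem apply_nonneg (hP : ∀ k, 0 ≤ P k) (hf : ∀ z, 0 ≤ f z) (x : ℝ) : 0 ≤ Toper P f x := by
  rcases lt_trichotomy x 0 with hx | rfl | hx
  · rw [apply_of_neg P f hx]
  · rw [apply_zero]
    exact tsum_nonneg fun k => mul_nonneg (hP _) (psi_nonneg hf k le_rfl)
  · rw [apply_of_ne P f hx.ne']
    exact mul_nonneg (by positivity) (tsum_nonneg fun k => mul_nonneg (hP _)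
      (setIntegral_nonneg measurableSet_Ioc fun y hy => psi_nonneg hf k hy.1.le))

variable {x₀ a : ℝ} (hP : ∀ k, 0 ≤ P k) (hP1 : HasSum (fun k => P (k + 1)) 1)
  (hf : BelowBarrier x₀ a f) (ha1 : a ≤ 1)
include hP hP1 hf ha1

theorem apply_zero_add_sum_le (hx₀ : 0 ≤ x₀) (s : Finset ℕ) :
    Toper P f 0 + ∑ k ∈ s, P (k + 1) * ((1 - a ^ k) * erlangCDF k x₀) ≤ 1 := by
  have ha0 : 0 ≤ a := hf.barrier_nonneg
  rw [apply_zero]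
  refine tsum_mul_add_sum_mul_le hP1 (fun k => hP _) (fun k => psi_nonneg hf.nonneg k le_rfl)
    (fun k => mul_nonneg (sub_nonneg.2 (pow_le_one₀ ha0 ha1)) (erlangCDF_nonneg k hx₀))
    (fun k => ?_) s
  have := psi_le hf k le_rfl hx₀
  simp only [erlangCDF, intervalIntegral.integral_same, sub_zero] at this ⊢
  linarith

theorem mul_apply_add_sum_le {x : ℝ} (hx : 0 < x) (hxx₀ : x ≤ x₀) (s : Finset ℕ) :
    x * Toper P f x + ∑ k ∈ s, P (k + 1) * ((1 - a ^ k) * deficit x₀ k x) ≤ x := by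
  have ha0 : 0 ≤ a := hf.barrier_nonneg
  rw [apply_of_ne P f hx.ne', ← mul_assoc, mul_one_div_cancel hx.ne', one_mul]
  refine tsum_mul_add_sum_mul_le hP1 (fun k => hP _)
    (fun k => setIntegral_nonneg measurableSet_Ioc fun y hy => psi_nonneg hf.nonneg k hy.1.le)
    (fun k => mul_nonneg (sub_nonneg.2 (pow_le_one₀ ha0 ha1)) (deficit_nonneg k hx.le hxx₀))
    (fun k => ?_) s
  have hR : ∫ y in Ioc 0 x, psi f k y
      ≤ ∫ y in Ioc 0 x, (1 - (1 - a ^ k) * (erlangCDF k x₀ - erlangCDF k y)) :=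
    integral_mono_of_nonneg
      ((ae_restrict_iff' measurableSet_Ioc).2 (ae_of_all _ fun y hy =>
        psi_nonneg hf.nonneg k hy.1.le))
      (by fun_prop : Continuous fun y => 1 - (1 - a ^ k) *
        (erlangCDF k x₀ - erlangCDF k y)).integrableOn_Ioc
      ((ae_restrict_iff' measurableSet_Ioc).2 (ae_of_all _ fun y hy =>
        psi_le hf k hy.1.le (hy.2.trans hxx₀)))
  have hRHS : ∫ y in Ioc 0 x, (1 - (1 - a ^ k) * (erlangCDF k x₀ - erlangCDF k y))
      = x - (1 - a ^ k) * deficit x₀ k x := by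
    rw [← intervalIntegral.integral_of_le hx.le, intervalIntegral.integral_sub
      intervalIntegrable_const ((by fun_prop : Continuous fun y => (1 - a ^ k) *
        (erlangCDF k x₀ - erlangCDF k y)).intervalIntegrable _ _),
      intervalIntegral.integral_const, intervalIntegral.integral_const_mul, deficit]
    simp
  linarith

end Operator

section Margin

variable {P : ℕ → ℝ} {x₀ a : ℝ} {J : ℕ} (hP : ∀ k, 0 ≤ P k) (ha0 : 0 ≤ a) (ha1 : a ≤ 1)
  (hx₀ : 0 < x₀)
  (hmargin : (1 - a) * x₀ ≤ ∑ k ∈ Finset.range J, P (k + 1) * ((1 - a ^ k) * deficit x₀ k x₀))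
include hP ha0 ha1 hx₀ hmargin

theorem margin_zero :
    1 - a ≤ ∑ k ∈ Finset.range J, P (k + 1) * ((1 - a ^ k) * erlangCDF k x₀) := by
  refine le_of_mul_le_mul_left ?_ hx₀
  rw [Finset.mul_sum, mul_comm]
  refine hmargin.trans (Finset.sum_le_sum fun k _ => ?_)
  have hw : 0 ≤ P (k + 1) * (1 - a ^ k) := mul_nonneg (hP _) (sub_nonneg.2 (pow_le_one₀ ha0 ha1))
  have := mul_le_mul_of_nonneg_left (deficit_le_mul_erlangCDF k hx₀.le) hw
  linarith

theorem margin_of_le {x : ℝ} (hx : 0 ≤ x) (hxx₀ : x ≤ x₀) :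
    (1 - a) * x ≤ ∑ k ∈ Finset.range J, P (k + 1) * ((1 - a ^ k) * deficit x₀ k x) := by
  refine le_of_mul_le_mul_left ?_ hx₀
  rw [Finset.mul_sum]
  calc x₀ * ((1 - a) * x) = x * ((1 - a) * x₀) := by ring
    _ ≤ x * ∑ k ∈ Finset.range J, P (k + 1) * ((1 - a ^ k) * deficit x₀ k x₀) :=
        mul_le_mul_of_nonneg_left hmargin hx
    _ ≤ _ := by
      rw [Finset.mul_sum]
      refine Finset.sum_le_sum fun k _ => ?_
      have hw : 0 ≤ P (k + 1) * (1 - a ^ k) :=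
        mul_nonneg (hP _) (sub_nonneg.2 (pow_le_one₀ ha0 ha1))
      have := mul_le_mul_of_nonneg_left (mul_deficit_le k hx hxx₀) hw
      linarith

end Margin

theorem belowBarrier_apply {P : ℕ → ℝ} {f : ℝ → ℝ} {x₀ a : ℝ} (hP : ∀ k, 0 ≤ P k)
    (hP1 : HasSum (fun k => P (k + 1)) 1) (hf : BelowBarrier x₀ a f) (ha1 : a ≤ 1)
    (hx₀ : 0 < x₀) {J : ℕ}
    (hmargin : (1 - a) * x₀ ≤ ∑ k ∈ Finset.range J, P (k + 1) * ((1 - a ^ k) * deficit x₀ k x₀)) :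
    BelowBarrier x₀ a (Toper P f) := by
  have ha0 : 0 ≤ a := hf.barrier_nonneg
  have hle : ∀ x ≤ x₀, Toper P f x ≤ a := by
    intro x hxx₀
    rcases lt_trichotomy x 0 with hx | rfl | hx
    · rwa [apply_of_neg P f hx]
    · linarith [apply_zero_add_sum_le hP hP1 hf ha1 hx₀.le (Finset.range J),
        margin_zero hP ha0 ha1 hx₀ hmargin]
    · refine le_of_mul_le_mul_left ?_ hx
      linarith [mul_apply_add_sum_le hP hP1 hf ha1 hx hxx₀ (Finset.range J),
        margin_of_le hP ha0 ha1 hx₀ hmargin hx.le hxx₀]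
  refine ⟨apply_nonneg hP hf.nonneg, fun x => ?_, hle⟩
  rcases le_or_gt x x₀ with hxx₀ | hxx₀
  · exact (hle x hxx₀).trans ha1
  · have hx : 0 < x := hx₀.trans hxx₀
    refine le_of_mul_le_mul_left ?_ hx
    simpa using mul_apply_add_sum_le hP hP1 ⟨hf.nonneg, hf.le_one, fun z _ => hf.le_one z⟩
      le_rfl hx le_rfl ∅

theorem hasSum_integral_sq_mul_erlang {P : ℕ → ℝ} (hP : ∀ k, 0 ≤ P k) (hP1 : ∀ k, P k ≤ 1)
    {x₀ : ℝ} (hx₀ : 0 ≤ x₀) :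
    HasSum (fun j => P (j + 2) * ∫ z in (0)..x₀, z ^ 2 * erlang j z)
      (∫ z in (0)..x₀, z ^ 2 * g2 P z) := by
  have hseries : ∀ z, Summable fun j => P (j + 2) * z ^ j / (Nat.factorial j : ℝ) := fun z =>
    (Real.summable_pow_div_factorial |z|).of_norm_bounded fun j => by
      rw [norm_div, norm_mul, norm_pow, Real.norm_eq_abs, Real.norm_eq_abs, abs_of_nonneg (hP _),
        Real.norm_natCast]
      gcongr
      exact mul_le_of_le_one_left (by positivity) (hP1 _)
  simp_rw [← intervalIntegral.integral_const_mul]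
  refine intervalIntegral.hasSum_integral_of_dominated_convergence
    (fun j _ => x₀ ^ 2 * (x₀ ^ j / (Nat.factorial j : ℝ)))
    (fun j => (by fun_prop : Continuous _).aestronglyMeasurable)
    (fun j => ae_of_all _ fun z hz => ?_)
    (ae_of_all _ fun _ _ => (Real.summable_pow_div_factorial x₀).mul_left _)
    intervalIntegrable_const (ae_of_all _ fun z _ => ?_)
  · rw [uIoc_of_le hx₀] at hz
    have hz0 := hz.1.le
    have hnn : 0 ≤ z ^ 2 * erlang j z := mul_nonneg (sq_nonneg z) (erlang_nonneg j hz0)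
    rw [Real.norm_eq_abs, abs_of_nonneg (mul_nonneg (hP _) hnn)]
    calc P (j + 2) * (z ^ 2 * erlang j z) ≤ z ^ 2 * erlang j z :=
          mul_le_of_le_one_left hnn (hP1 _)
      _ ≤ x₀ ^ 2 * (x₀ ^ j / (Nat.factorial j : ℝ)) :=
          mul_le_mul (pow_le_pow_left₀ hz0 hz.2 2) (erlang_le hz0 hz.2)
            (erlang_nonneg j hz0) (by positivity)
  · have hterm : (fun j => P (j + 2) * (z ^ 2 * erlang j z))
        = fun j => z ^ 2 * Real.exp (-z) * (P (j + 2) * z ^ j / (Nat.factorial j : ℝ)) := by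
      funext j; unfold erlang; ring
    have hg2 : z ^ 2 * g2 P z
        = z ^ 2 * Real.exp (-z) * ∑' j, P (j + 2) * z ^ j / (Nat.factorial j : ℝ) := by
      unfold g2; ring
    rw [hterm, hg2]
    exact (hseries z).hasSum.mul_left _

theorem exists_margin {P : ℕ → ℝ} (hP : ∀ k, 0 ≤ P k) (hP1 : ∀ k, P k ≤ 1) {x₀ : ℝ}
    (hx₀ : 0 < x₀) (h : 1 < ∫ z in Ioc 0 x₀, z * (min x₀ z / x₀) * g2 P z) :
    ∃ a J, 0 < a ∧ a < 1 ∧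
      (1 - a) * x₀ ≤ ∑ k ∈ Finset.range J, P (k + 1) * ((1 - a ^ k) * deficit x₀ k x₀) := by
  have hI : ∫ z in Ioc 0 x₀, z * (min x₀ z / x₀) * g2 P z
      = (∫ z in (0)..x₀, z ^ 2 * g2 P z) / x₀ := by
    rw [intervalIntegral.integral_of_le hx₀.le, ← integral_div]
    refine setIntegral_congr_fun measurableSet_Ioc fun z hz => ?_
    rw [min_eq_right hz.2]
    ring
  have hsum : HasSum (fun k => P (k + 1) * (k * deficit x₀ k x₀))
      (∫ z in (0)..x₀, z ^ 2 * g2 P z) := by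
    rw [← hasSum_nat_add_iff' 1]
    simpa [succ_mul_deficit_self] using hasSum_integral_sq_mul_erlang hP hP1 hx₀.le
  rw [hI, lt_div_iff₀ hx₀, one_mul] at h
  obtain ⟨J, hJ⟩ := (hsum.tendsto_sum_nat.eventually (eventually_gt_nhds h)).exists
  set S := ∑ k ∈ Finset.range J, P (k + 1) * (k * deficit x₀ k x₀)
  have hlim : Tendsto (fun a : ℝ => a ^ J * S) (nhdsWithin 1 (Iio 1)) (nhds S) := by
    have := ((by fun_prop : Continuous fun a : ℝ => a ^ J * S).tendsto 1).mono_left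
      (nhdsWithin_le_nhds (s := Iio 1))
    rwa [one_pow, one_mul] at this
  have hIoo : ∀ᶠ a : ℝ in nhdsWithin 1 (Iio 1), a ∈ Ioo 0 1 := Ioo_mem_nhdsLT zero_lt_one
  obtain ⟨a, ⟨ha0, ha1⟩, haS⟩ := (hIoo.and (hlim.eventually (eventually_gt_nhds hJ))).exists
  refine ⟨a, J, ha0, ha1, ?_⟩
  calc (1 - a) * x₀ ≤ (1 - a) * (a ^ J * S) := by gcongr
    _ = ∑ k ∈ Finset.range J, P (k + 1) * (k * (1 - a) * a ^ J * deficit x₀ k x₀) := by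
        rw [Finset.mul_sum, Finset.mul_sum]
        exact Finset.sum_congr rfl fun k _ => by ring
    _ ≤ _ := Finset.sum_le_sum fun k hk => by
        refine mul_le_mul_of_nonneg_left (mul_le_mul_of_nonneg_right ?_
          (deficit_nonneg k hx₀.le le_rfl)) (hP _)
        calc k * (1 - a) * a ^ J ≤ k * (1 - a) * a ^ k :=
              mul_le_mul_of_nonneg_left (pow_le_pow_of_le_one ha0.le ha1.le
                (Finset.mem_range.1 hk).le) (mul_nonneg k.cast_nonneg (by linarith))
          _ ≤ 1 - a ^ k := mul_one_sub_mul_pow_le ha0.le ha1.le k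

end Toper

theorem stmt_4_general (P : ℕ → ℝ)
    (hP0 : P 0 = 0) (hPnonneg : ∀ k, 0 ≤ P k) (hPsum : ∑' k, P k = 1)
    (x₀ : ℝ) (hx₀ : 0 < x₀)
    (h2 : ∀ x, 0 < x → x ≤ x₀ → 1 < ∫ z in Ioc (0 : ℝ) x₀, z * (min x z / x) * g2 P z)
    (q : ℝ → ℝ)
    (hq : ∀ x, 0 ≤ x →
      Tendsto (fun l => (Toper P)^[l] (fun _ => 0) x) atTop (nhds (q x))) :
    (∃ ε : ℝ, 0 < ε ∧ ε < 1 ∧ ∀ x, 0 ≤ x → x ≤ x₀ → q x ≤ 1 - ε) ∧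
    ¬ (∀ x, 0 ≤ x → q x = 1) := by
  have hP : HasSum P 1 := by
    refine hPsum ▸ Summable.hasSum ?_
    by_contra h
    simp [tsum_eq_zero_of_not_summable h] at hPsum
  have hPle : ∀ k, P k ≤ 1 := fun k => le_hasSum hP k fun j _ => hPnonneg j
  have hPsucc : HasSum (fun k => P (k + 1)) 1 := by
    simpa [hP0] using (hasSum_nat_add_iff' 1).2 hP
  obtain ⟨a, J, ha0, ha1, hmargin⟩ := Toper.exists_margin hPnonneg hPle hx₀ (h2 x₀ hx₀ le_rfl)
  have hiter : ∀ l, Toper.BelowBarrier x₀ a ((Toper P)^[l] fun _ => 0) := by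
    intro l
    induction l with
    | zero => exact ⟨fun _ => le_rfl, fun _ => zero_le_one, fun _ _ => ha0.le⟩
    | succ l ih =>
      rw [Function.iterate_succ_apply']
      exact Toper.belowBarrier_apply hPnonneg hPsucc ih ha1.le hx₀ hmargin
  have hqa : ∀ x, 0 ≤ x → x ≤ x₀ → q x ≤ a := fun x hx hxx₀ =>
    le_of_tendsto (hq x hx) (Eventually.of_forall fun l => (hiter l).le_of_le x hxx₀)
  refine ⟨⟨1 - a, by linarith, by linarith, fun x hx hxx₀ => by simpa using hqa x hx hxx₀⟩,
    fun h => ?_⟩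
  linarith [h 0 le_rfl, hqa 0 le_rfl hx₀.le]

theorem stmt_4 (P : ℕ → ℝ)
    (hP0 : P 0 = 0) (hPnonneg : ∀ k, 0 ≤ P k) (hPsum : ∑' k, P k = 1)
    (hPmean : Summable fun k : ℕ => (k : ℝ) * P k) (hP1 : P 1 < 1)
    (x₀ : ℝ) (hx₀ : 0 < x₀)
    (h1 : 1 < ∫ z in Ioc (0 : ℝ) x₀, z * g2 P z)
    (h2 : ∀ x, 0 < x → x ≤ x₀ → 1 < ∫ z in Ioc (0 : ℝ) x₀, z * (min x z / x) * g2 P z)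
    (q : ℝ → ℝ)
    (hq : ∀ x, 0 ≤ x →
      Tendsto (fun l => (Toper P)^[l] (fun _ => 0) x) atTop (nhds (q x))) :
    (∃ ε : ℝ, 0 < ε ∧ ε < 1 ∧ ∀ x, 0 ≤ x → x ≤ x₀ → q x ≤ 1 - ε) ∧
    ¬ (∀ x, 0 ≤ x → q x = 1) :=
  stmt_4_general P hP0 hPnonneg hPsum x₀ hx₀ h2 q hq
end

section
/- Assume there exists θ > 0 such that M_θ := ∑_{k≥1} P(k)·e^{θ·k} < ∞. Then for every integer i ≥ 1 and every z ≥ 0, ∑_{k≥i} P(k)·e^{−z}·z^{k−i}/(k−i)! ≤ (M_θ / e^{θ·i})·exp(−z·(1 − e^{−θ})). -/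
/-! Since `P k · e^{θk} ≤ M_θ` for every `k`, each `P (k + i)` is at most `M_θ e^{-θi} (e^{-θ})^k`.
The sum is therefore dominated termwise by `M_θ e^{-θi}` times the Poisson-type series
`∑ e^{-z} (e^{-θ} z)^k / k! = e^{-z} e^{z e^{-θ}}`. -/

open Real

theorem le_tsum_mul_exp_mul_exp_neg {ι : Type*} {f w : ι → ℝ} (hf : ∀ i, 0 ≤ f i)
    (hsum : Summable fun i => f i * exp (w i)) (i : ι) :
    f i ≤ (∑' j, f j * exp (w j)) * exp (-w i) :=
  calc f i = f i * exp (w i) * exp (-w i) := by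
        rw [mul_assoc, ← exp_add, add_neg_cancel, exp_zero, mul_one]
    _ ≤ _ := by
        gcongr
        exact hsum.le_tsum i fun j _ => mul_nonneg (hf j) (exp_pos _).le

theorem hasSum_exp_neg_mul_pow_div_factorial (z q : ℝ) :
    HasSum (fun k : ℕ => exp (-z) * (q * z) ^ k / k.factorial) (exp (-z * (1 - q))) := by
  have h := (NormedSpace.expSeries_div_hasSum_exp (q * z)).mul_left (exp (-z))
  rw [← Real.exp_eq_exp_ℝ, ← exp_add, show -z + q * z = -z * (1 - q) by ring] at h
  simpa only [mul_div_assoc] using h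

theorem stmt_5_general (P : ℕ → ℝ)
    (hPnonneg : ∀ k, 0 ≤ P k)
    (θ : ℝ)
    (hMθ : Summable fun k : ℕ => P k * Real.exp (θ * k)) :
    ∀ i : ℕ, 1 ≤ i → ∀ z : ℝ, 0 ≤ z →
      (∑' k : ℕ, P (k + i) * Real.exp (-z) * z ^ k / (Nat.factorial k : ℝ)) ≤
        ((∑' k : ℕ, P k * Real.exp (θ * k)) / Real.exp (θ * i)) *
          Real.exp (-z * (1 - Real.exp (-θ))) := by
  intro i _ z hz
  set M := ∑' k : ℕ, P k * exp (θ * k)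
  have hP_le (k : ℕ) : P (k + i) ≤ M / exp (θ * i) * exp (-θ) ^ k :=
    calc P (k + i) ≤ M * exp (-(θ * ↑(k + i))) := le_tsum_mul_exp_mul_exp_neg hPnonneg hMθ (k + i)
      _ = M / exp (θ * i) * exp (-θ) ^ k := by
        rw [← exp_nat_mul, div_eq_mul_inv, ← exp_neg, mul_assoc, ← exp_add]
        push_cast
        ring_nf
  have hdom (k : ℕ) : P (k + i) * exp (-z) * z ^ k / k.factorial ≤
      M / exp (θ * i) * (exp (-z) * (exp (-θ) * z) ^ k / k.factorial) :=
    calc P (k + i) * exp (-z) * z ^ k / k.factorial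
        ≤ M / exp (θ * i) * exp (-θ) ^ k * exp (-z) * z ^ k / k.factorial := by gcongr; exact hP_le k
      _ = _ := by ring
  have hM : 0 ≤ M := tsum_nonneg fun k => mul_nonneg (hPnonneg k) (exp_pos _).le
  refine Real.tsum_le_of_sum_le (fun k => by have := hPnonneg (k + i); positivity) fun s => ?_
  exact (Finset.sum_le_sum fun k _ => hdom k).trans <| sum_le_hasSum s
    (fun _ _ => by positivity)
    ((hasSum_exp_neg_mul_pow_div_factorial z _).mul_left _)

theorem stmt_5 (P : ℕ → ℝ)
    (hP0 : P 0 = 0) (hPnonneg : ∀ k, 0 ≤ P k) (hPsum : ∑' k, P k = 1)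
    (hPmean : Summable fun k : ℕ => (k : ℝ) * P k) (hP1 : P 1 < 1)
    (θ : ℝ) (hθ : 0 < θ)
    (hMθ : Summable fun k : ℕ => P k * Real.exp (θ * k)) :
    ∀ i : ℕ, 1 ≤ i → ∀ z : ℝ, 0 ≤ z →
      (∑' k : ℕ, P (k + i) * Real.exp (-z) * z ^ k / (Nat.factorial k : ℝ)) ≤
        ((∑' k : ℕ, P k * Real.exp (θ * k)) / Real.exp (θ * i)) *
          Real.exp (-z * (1 - Real.exp (-θ))) :=
  stmt_5_general P hPnonneg θ hMθ
end

section
/- Assume there exists θ > 0 such that M_θ := ∑_{k≥1} P(k)·e^{θ·k} < ∞, and set C = M_θ/e^{2θ} and Υ = 1 − e^{−θ}. Then for every integer i ≥ 0 and every x ≥ 0, 0 ≤ G_i(x) ≤ C^i·e^{−i·Υ·x}/(Υ^{2i}·(i!)²). Consequently, for every complex β ≠ 0 and every x ≥ 0 the series ∑_{i=0}^∞ G_i(x)·(−1/β)^i defining L(β,x) converges absolutely. -/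
/-!
Since `z^k / k! = e^{θk} (e^{-θ} z)^k / k! ≤ e^{θk} e^{e^{-θ} z}`, the kernel satisfies
`0 ≤ g₂(z) ≤ C e^{-Υz}` on `[0, ∞)`. If `0 ≤ G_i ≤ K_i e^{-iΥx}` there, the integrand `g₂ G_i` is
at most `C K_i e^{-(i+1)Υz}`, and the two integrations over `(x, ∞)` divide this by `((i+1)Υ)²`,
so `K_{i+1} = C K_i / ((i+1)Υ)²`, which is the recursion solved by `C^i / (Υ^{2i} (i!)²)`.
For `x ≥ 0` this bounds `|G_i(x) (-1/β)^i|` by `r^i / (i!)²` with `r = C / (Υ² |β|)`.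
-/

open MeasureTheory Real Set Filter

/-- `G_0(x) = 1`, `G_{i+1}(x) = ∫_x^∞ ∫_y^∞ g₂(z) G_i(z) dz dy`. -/
noncomputable def Gfun (P : ℕ → ℝ) : ℕ → ℝ → ℝ
  | 0 => fun _ => 1
  | (i + 1) => fun x => ∫ y in Ioi x, ∫ z in Ioi y, g2 P z * Gfun P i z

/-- `L(β,x) = ∑_{i=0}^∞ G_i(x) (-1/β)^i` (real version). -/
noncomputable def Lfun (P : ℕ → ℝ) (β : ℝ) (x : ℝ) : ℝ :=
  ∑' i : ℕ, Gfun P i x * (-1 / β) ^ i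

open scoped Nat

lemma tsum_nat_add_le_tsum {f : ℕ → ℝ} (hf0 : ∀ i, 0 ≤ f i) (hf : Summable f) (k : ℕ) :
    ∑' i, f (i + k) ≤ ∑' i, f i := by
  rw [← hf.sum_add_tsum_nat_add k]
  exact le_add_of_nonneg_left (Finset.sum_nonneg fun i _ => hf0 i)

lemma summable_pow_div_factorial_sq (r : ℝ) : Summable fun i : ℕ => r ^ i / (i ! : ℝ) ^ 2 := by
  refine .of_norm_bounded (Real.summable_pow_div_factorial |r|) fun i => ?_
  have hfac : (1 : ℝ) ≤ i ! := by exact_mod_cast i.factorial_pos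
  rw [norm_div, norm_pow, norm_pow, Real.norm_eq_abs, Real.norm_natCast]
  gcongr
  nlinarith

lemma pow_div_factorial_le_exp_mul_exp {z : ℝ} (hz : 0 ≤ z) (θ : ℝ) (k : ℕ) :
    z ^ k / k ! ≤ exp (θ * k) * exp (exp (-θ) * z) := by
  have h := Real.pow_div_factorial_le_exp (x := exp (-θ) * z) (mul_nonneg (exp_pos (-θ)).le hz) k
  calc z ^ k / k ! = exp (θ * k) * ((exp (-θ) * z) ^ k / k !) := by
        rw [mul_pow, ← exp_nat_mul, mul_div_assoc, ← mul_assoc, ← exp_add]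
        ring_nf; simp
    _ ≤ exp (θ * k) * exp (exp (-θ) * z) := by gcongr

lemma g2_nonneg {P : ℕ → ℝ} (hP : ∀ k, 0 ≤ P k) {z : ℝ} (hz : 0 ≤ z) : 0 ≤ g2 P z :=
  mul_nonneg (exp_pos _).le (tsum_nonneg fun k => by have := hP (k + 2); positivity)

lemma g2_le {P : ℕ → ℝ} (hP : ∀ k, 0 ≤ P k) {θ : ℝ}
    (hM : Summable fun k : ℕ => P k * exp (θ * k)) {z : ℝ} (hz : 0 ≤ z) :
    g2 P z ≤ (∑' k : ℕ, P k * exp (θ * k)) / exp (2 * θ) * exp (-(1 - exp (-θ)) * z) := by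
  set M := ∑' k : ℕ, P k * exp (θ * k)
  set E := exp (exp (-θ) * z - 2 * θ)
  have htail : Summable fun k : ℕ => P (k + 2) * exp (θ * ↑(k + 2)) :=
    (summable_nat_add_iff 2).mpr hM
  have hterm (k : ℕ) : P (k + 2) * z ^ k / k ! ≤ E * (P (k + 2) * exp (θ * ↑(k + 2))) := by
    have h := mul_le_mul_of_nonneg_left (pow_div_factorial_le_exp_mul_exp hz θ k) (hP (k + 2))
    calc P (k + 2) * z ^ k / k ! = P (k + 2) * (z ^ k / k !) := mul_div_assoc _ _ _
      _ ≤ P (k + 2) * (exp (θ * k) * exp (exp (-θ) * z)) := h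
      _ = E * (P (k + 2) * exp (θ * ↑(k + 2))) := by
        rw [mul_left_comm E, ← exp_add, ← exp_add]
        push_cast; ring_nf
  have hseries : ∑' k : ℕ, P (k + 2) * z ^ k / k ! ≤ E * M :=
    calc ∑' k : ℕ, P (k + 2) * z ^ k / k !
        ≤ ∑' k : ℕ, E * (P (k + 2) * exp (θ * ↑(k + 2))) :=
          Summable.tsum_le_tsum hterm
            (.of_nonneg_of_le (fun k => by have := hP (k + 2); positivity) hterm
              (htail.mul_left E))
            (htail.mul_left E)
      _ = E * ∑' k : ℕ, P (k + 2) * exp (θ * ↑(k + 2)) := tsum_mul_left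
      _ ≤ E * M := by
          gcongr
          exact tsum_nat_add_le_tsum (fun k => by have := hP k; positivity) hM 2
  calc g2 P z ≤ exp (-z) * (E * M) := mul_le_mul_of_nonneg_left hseries (exp_pos _).le
    _ = M / exp (2 * θ) * exp (-(1 - exp (-θ)) * z) := by
      simp only [E, div_eq_mul_inv, ← exp_neg, ← mul_assoc, mul_comm _ M, mul_assoc M, ← exp_add]
      ring_nf

lemma setIntegral_Ioi_le_of_le_exp {f : ℝ → ℝ} {A c y : ℝ} (hc : 0 < c)
    (hf0 : ∀ z ∈ Ioi y, 0 ≤ f z) (hf : ∀ z ∈ Ioi y, f z ≤ A * exp (-c * z)) :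
    ∫ z in Ioi y, f z ≤ A * exp (-c * y) / c := by
  have hneg : -c < 0 := neg_neg_of_pos hc
  calc ∫ z in Ioi y, f z ≤ ∫ z in Ioi y, A * exp (-c * z) :=
        setIntegral_mono_of_nonneg hf0 hf ((integrableOn_exp_mul_Ioi hneg y).const_mul A)
    _ = A * exp (-c * y) / c := by
        rw [integral_const_mul, integral_exp_mul_Ioi hneg, neg_div_neg_eq, mul_div_assoc]

lemma setIntegral_Ioi_setIntegral_Ioi_le_of_le_exp {f : ℝ → ℝ} {A c x : ℝ} (hc : 0 < c)
    (hf0 : ∀ z ∈ Ioi x, 0 ≤ f z) (hf : ∀ z ∈ Ioi x, f z ≤ A * exp (-c * z)) :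
    ∫ y in Ioi x, ∫ z in Ioi y, f z ≤ A * exp (-c * x) / c ^ 2 := by
  have hsub {y : ℝ} (hy : y ∈ Ioi x) : Ioi y ⊆ Ioi x := Ioi_subset_Ioi hy.le
  calc ∫ y in Ioi x, ∫ z in Ioi y, f z ≤ A / c * exp (-c * x) / c := by
        refine setIntegral_Ioi_le_of_le_exp hc
          (fun y hy => setIntegral_nonneg measurableSet_Ioi fun z hz => hf0 z (hsub hy hz))
          (fun y hy => ?_)
        rw [div_mul_eq_mul_div]
        exact setIntegral_Ioi_le_of_le_exp hc (fun z hz => hf0 z (hsub hy hz))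
          (fun z hz => hf z (hsub hy hz))
    _ = A * exp (-c * x) / c ^ 2 := by ring

lemma Gfun_nonneg_and_le {P : ℕ → ℝ} {C U : ℝ} (hU : 0 < U)
    (hg2 : ∀ z, 0 ≤ z → 0 ≤ g2 P z ∧ g2 P z ≤ C * exp (-U * z)) (i : ℕ) {x : ℝ} (hx : 0 ≤ x) :
    0 ≤ Gfun P i x ∧
      Gfun P i x ≤ C ^ i * exp (-(i : ℝ) * U * x) / (U ^ (2 * i) * (i ! : ℝ) ^ 2) := by
  induction i generalizing x with
  | zero => simp [Gfun]
  | succ i ih =>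
    set K := C ^ i / (U ^ (2 * i) * (i ! : ℝ) ^ 2)
    have hpos {z : ℝ} (hz : z ∈ Ioi x) : 0 ≤ z := hx.trans hz.le
    have hprod0 (z : ℝ) (hz : z ∈ Ioi x) : 0 ≤ g2 P z * Gfun P i z :=
      mul_nonneg (hg2 z (hpos hz)).1 (ih (hpos hz)).1
    have hprod (z : ℝ) (hz : z ∈ Ioi x) :
        g2 P z * Gfun P i z ≤ C * K * exp (-((i + 1) * U) * z) := by
      obtain ⟨hg0, hg⟩ := hg2 z (hpos hz)
      obtain ⟨hG0, hG⟩ := ih (hpos hz)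
      calc g2 P z * Gfun P i z ≤ C * exp (-U * z) * (K * exp (-(i : ℝ) * U * z)) :=
            mul_le_mul hg (by rwa [div_mul_eq_mul_div]) hG0 (hg0.trans hg)
        _ = C * K * exp (-((i + 1) * U) * z) := by
            rw [mul_mul_mul_comm, ← exp_add]; ring_nf
    refine ⟨setIntegral_nonneg measurableSet_Ioi fun y hy =>
      setIntegral_nonneg measurableSet_Ioi fun z hz => hprod0 z (mem_Ioi.2 (lt_trans hy hz)), ?_⟩
    calc Gfun P (i + 1) x ≤ C * K * exp (-((i + 1) * U) * x) / ((i + 1) * U) ^ 2 :=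
          setIntegral_Ioi_setIntegral_Ioi_le_of_le_exp (by positivity) hprod0 hprod
      _ = _ := by
          simp only [K, Nat.factorial_succ]
          push_cast
          field_simp
          ring

theorem stmt_6_general (P : ℕ → ℝ)
    (hPnonneg : ∀ k, 0 ≤ P k)
    (θ : ℝ) (hθ : 0 < θ)
    (hMθ : Summable fun k : ℕ => P k * Real.exp (θ * k)) :
    (∀ i : ℕ, ∀ x : ℝ, 0 ≤ x →
      0 ≤ Gfun P i x ∧
      Gfun P i x ≤
        ((∑' k : ℕ, P k * Real.exp (θ * k)) / Real.exp (2 * θ)) ^ i *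
          Real.exp (-(i : ℝ) * (1 - Real.exp (-θ)) * x) /
          ((1 - Real.exp (-θ)) ^ (2 * i) * (Nat.factorial i : ℝ) ^ 2)) ∧
    (∀ β : ℂ, β ≠ 0 → ∀ x : ℝ, 0 ≤ x →
      Summable fun i : ℕ => ‖(Gfun P i x : ℂ) * (-1 / β) ^ i‖) := by
  set C := (∑' k : ℕ, P k * exp (θ * k)) / exp (2 * θ)
  set U := 1 - exp (-θ)
  have hU : 0 < U := sub_pos.2 (exp_lt_one_iff.2 (neg_neg_of_pos hθ))
  have hC : 0 ≤ C := div_nonneg (tsum_nonneg fun k => by have := hPnonneg k; positivity)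
    (exp_pos _).le
  have hG (i : ℕ) {x : ℝ} (hx : 0 ≤ x) := Gfun_nonneg_and_le hU
    (fun z hz => ⟨g2_nonneg hPnonneg hz, g2_le hPnonneg hMθ hz⟩) i hx
  refine ⟨fun i x hx => hG i hx, fun β _ x hx => ?_⟩
  refine .of_nonneg_of_le (fun i => norm_nonneg _) (fun i => ?_)
    (summable_pow_div_factorial_sq (C / U ^ 2 * ‖β‖⁻¹))
  obtain ⟨hG0, hGle⟩ := hG i hx
  have hexp : exp (-(i : ℝ) * U * x) ≤ 1 := exp_le_one_iff.2 (by
    have : 0 ≤ (i : ℝ) * U * x := by positivity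
    linarith)
  calc ‖(Gfun P i x : ℂ) * (-1 / β) ^ i‖ = Gfun P i x * ‖β‖⁻¹ ^ i := by
        rw [norm_mul, norm_pow, Complex.norm_real, Real.norm_of_nonneg hG0, norm_div, norm_neg,
          norm_one, one_div]
    _ ≤ C ^ i * 1 / (U ^ (2 * i) * (i ! : ℝ) ^ 2) * ‖β‖⁻¹ ^ i := by
        gcongr
        exact hGle.trans (by gcongr)
    _ = (C / U ^ 2 * ‖β‖⁻¹) ^ i / (i ! : ℝ) ^ 2 := by rw [mul_pow, div_pow, pow_mul]; ring

theorem stmt_6 (P : ℕ → ℝ)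
    (hP0 : P 0 = 0) (hPnonneg : ∀ k, 0 ≤ P k) (hPsum : ∑' k, P k = 1)
    (hPmean : Summable fun k : ℕ => (k : ℝ) * P k) (hP1 : P 1 < 1)
    (θ : ℝ) (hθ : 0 < θ)
    (hMθ : Summable fun k : ℕ => P k * Real.exp (θ * k)) :
    (∀ i : ℕ, ∀ x : ℝ, 0 ≤ x →
      0 ≤ Gfun P i x ∧
      Gfun P i x ≤
        ((∑' k : ℕ, P k * Real.exp (θ * k)) / Real.exp (2 * θ)) ^ i *
          Real.exp (-(i : ℝ) * (1 - Real.exp (-θ)) * x) /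
          ((1 - Real.exp (-θ)) ^ (2 * i) * (Nat.factorial i : ℝ) ^ 2)) ∧
    (∀ β : ℂ, β ≠ 0 → ∀ x : ℝ, 0 ≤ x →
      Summable fun i : ℕ => ‖(Gfun P i x : ℂ) * (-1 / β) ^ i‖) :=
  stmt_6_general P hPnonneg θ hθ hMθ
end

section
/- Assume there exists θ > 0 such that ∑_{k≥1} P(k)·e^{θ·k} < ∞. Then for every real β ≠ 0 the function x ↦ L(β,x) is twice continuously differentiable on [0,∞) and satisfies the differential equation β·∂²L/∂x²(β,x) = −g₂(x)·L(β,x) for all x > 0. -/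
open MeasureTheory Real Set Filter

open Nat

/-! The moment condition gives `P k ≤ M e^{-θk}`, hence `|g₂ z| ≤ C e^{-δz}` on `(-1, ∞)` with
`δ = 1 - e^{-θ}`. Integrating twice, induction gives `|G_i x| ≤ (C/δ²)^i / i! · e^{-iδx}`, so the
series for `L` and its termwise first and second derivatives converge locally uniformly on
`(-1, ∞)`. Since `G_{i+1}'' = g₂ G_i`, the second derivative of `L` is `-(1/β) g₂ L`. -/

def ExpDecayOn (f : ℝ → ℝ) (a c l : ℝ) : Prop :=
  ContinuousOn f (Ioi a) ∧ ∀ z ∈ Ioi a, |f z| ≤ c * exp (-l * z)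

theorem hasDerivAt_integral_Ioi {f : ℝ → ℝ} {a x : ℝ} (hf : IntegrableOn f (Ioi a))
    (hfc : ContinuousOn f (Ioi a)) (hx : a < x) :
    HasDerivAt (fun t => ∫ z in Ioi t, f z) (-f x) x := by
  have hsplit : ∀ t ∈ Ioi a, ∫ z in Ioi t, f z = (∫ z in Ioi a, f z) - ∫ z in a..t, f z :=
    fun t ht => eq_sub_of_add_eq'
      (intervalIntegral.integral_interval_add_Ioi hf (hf.mono_set (Ioi_subset_Ioi ht.out.le)))
  have hFTC : HasDerivAt (fun t => ∫ z in a..t, f z) (f x) x :=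
    intervalIntegral.integral_hasDerivAt_right
      ((intervalIntegrable_iff_integrableOn_Ioc_of_le hx.le).mpr (hf.mono_set Ioc_subset_Ioi_self))
      (hfc.stronglyMeasurableAtFilter isOpen_Ioi x hx) (hfc.continuousAt (Ioi_mem_nhds hx))
  exact (hFTC.const_sub _).congr_of_eventuallyEq (eventually_of_mem (Ioi_mem_nhds hx) hsplit)

namespace ExpDecayOn

variable {f g : ℝ → ℝ} {a c d l m : ℝ}

theorem nonneg (h : ExpDecayOn f a c l) : 0 ≤ c :=
  (mul_nonneg_iff_of_pos_right (exp_pos _)).mp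
    ((abs_nonneg _).trans (h.2 (a + 1) (lt_add_one a)))

theorem abs_le_of_mem_Ioi (h : ExpDecayOn f a c l) (hl : 0 ≤ l) {x : ℝ} (hx : x ∈ Ioi a) :
    |f x| ≤ c * exp (-l * a) :=
  (h.2 x hx).trans (mul_le_mul_of_nonneg_left
    (exp_le_exp.mpr (by nlinarith [hx.out])) h.nonneg)

theorem mono (h : ExpDecayOn f a c l) (hcd : c ≤ d) : ExpDecayOn f a d l :=
  ⟨h.1, fun z hz => (h.2 z hz).trans (mul_le_mul_of_nonneg_right hcd (exp_pos _).le)⟩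

theorem mul (hf : ExpDecayOn f a c l) (hg : ExpDecayOn g a d m) :
    ExpDecayOn (fun x => f x * g x) a (c * d) (l + m) := by
  refine ⟨hf.1.mul hg.1, fun z hz => ?_⟩
  calc |f z * g z| = |f z| * |g z| := abs_mul _ _
    _ ≤ c * exp (-l * z) * (d * exp (-m * z)) :=
        mul_le_mul (hf.2 z hz) (hg.2 z hz) (abs_nonneg _) ((abs_nonneg _).trans (hf.2 z hz))
    _ = c * d * exp (-(l + m) * z) := by
        rw [show -(l + m) * z = -l * z + -m * z by ring, exp_add]; ring

theorem integrableOn (h : ExpDecayOn f a c l) (hl : 0 < l) : IntegrableOn f (Ioi a) :=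
  Integrable.mono' ((integrableOn_exp_mul_Ioi (neg_lt_zero.mpr hl) a).const_mul c)
    (h.1.aestronglyMeasurable measurableSet_Ioi)
    (ae_restrict_of_forall_mem measurableSet_Ioi h.2)

theorem hasDerivAt_integral_Ioi (h : ExpDecayOn f a c l) (hl : 0 < l) {x : ℝ}
    (hx : x ∈ Ioi a) : HasDerivAt (fun t => ∫ z in Ioi t, f z) (-f x) x :=
  _root_.hasDerivAt_integral_Ioi (h.integrableOn hl) h.1 hx

theorem integral_Ioi (h : ExpDecayOn f a c l) (hl : 0 < l) :
    ExpDecayOn (fun t => ∫ z in Ioi t, f z) a (c / l) l := by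
  refine ⟨fun x hx => (h.hasDerivAt_integral_Ioi hl hx).continuousAt.continuousWithinAt,
    fun x hx => ?_⟩
  calc |∫ z in Ioi x, f z| ≤ ∫ z in Ioi x, c * exp (-l * z) := by
        rw [← Real.norm_eq_abs]
        exact norm_integral_le_of_norm_le
          ((integrableOn_exp_mul_Ioi (neg_lt_zero.mpr hl) x).const_mul c)
          (ae_restrict_of_forall_mem measurableSet_Ioi fun z hz => h.2 z (Ioi_subset_Ioi hx.out.le hz))
    _ = c / l * exp (-l * x) := by
        rw [integral_const_mul, integral_exp_mul_Ioi (neg_lt_zero.mpr hl), neg_div_neg_eq]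
        ring

end ExpDecayOn

-- `Gfun P (i + 1)` is definitionally `fun x => ∫ y in Ioi x, Hfun P i y`.
noncomputable def Hfun (P : ℕ → ℝ) (i : ℕ) (y : ℝ) : ℝ :=
  ∫ z in Ioi y, g2 P z * Gfun P i z

section Iterates

variable {P : ℕ → ℝ} {a C δ : ℝ}

theorem expDecayOn_Gfun (hg : ExpDecayOn (g2 P) a C δ) (hδ : 0 < δ) (i : ℕ) :
    ExpDecayOn (Gfun P i) a ((C / δ ^ 2) ^ i / i !) (i * δ) := by
  induction i with
  | zero => exact ⟨continuousOn_const, fun z _ => by simp [Gfun]⟩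
  | succ i ih =>
    have hl : 0 < δ + i * δ := by positivity
    rw [show ((i + 1 : ℕ) : ℝ) * δ = δ + i * δ by push_cast; ring]
    refine (((hg.mul ih).integral_Ioi hl).integral_Ioi hl).mono ?_
    have hK : 0 ≤ C / δ ^ 2 := div_nonneg hg.nonneg (sq_nonneg δ)
    have hδ' := hδ.ne'
    calc C * ((C / δ ^ 2) ^ i / i !) / (δ + i * δ) / (δ + i * δ)
        = (C / δ ^ 2) ^ (i + 1) / i ! / ((i : ℝ) + 1) ^ 2 := by
          rw [pow_succ, div_pow, div_pow]; field_simp; ring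
      _ ≤ (C / δ ^ 2) ^ (i + 1) / i ! / ((i : ℝ) + 1) :=
          div_le_div_of_nonneg_left (by positivity) (by positivity) (by nlinarith)
      _ = (C / δ ^ 2) ^ (i + 1) / (i + 1) ! := by
          rw [factorial_succ, cast_mul, cast_succ]; field_simp

theorem expDecayOn_Hfun (hg : ExpDecayOn (g2 P) a C δ) (hδ : 0 < δ) (i : ℕ) :
    ExpDecayOn (Hfun P i) a (C * ((C / δ ^ 2) ^ i / i !) / (δ + i * δ)) (δ + i * δ) :=
  (hg.mul (expDecayOn_Gfun hg hδ i)).integral_Ioi (by positivity)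

theorem hasDerivAt_Hfun (hg : ExpDecayOn (g2 P) a C δ) (hδ : 0 < δ) (i : ℕ) {x : ℝ}
    (hx : x ∈ Ioi a) : HasDerivAt (Hfun P i) (-(g2 P x * Gfun P i x)) x :=
  (hg.mul (expDecayOn_Gfun hg hδ i)).hasDerivAt_integral_Ioi (by positivity) hx

theorem hasDerivAt_Gfun_succ (hg : ExpDecayOn (g2 P) a C δ) (hδ : 0 < δ) (i : ℕ) {x : ℝ}
    (hx : x ∈ Ioi a) : HasDerivAt (Gfun P (i + 1)) (-Hfun P i x) x :=
  (expDecayOn_Hfun hg hδ i).hasDerivAt_integral_Ioi (by positivity) hx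

theorem abs_Gfun_le (hg : ExpDecayOn (g2 P) a C δ) (hδ : 0 < δ) (i : ℕ) {x : ℝ}
    (hx : x ∈ Ioi a) : |Gfun P i x| ≤ (C / δ ^ 2 * exp (-δ * a)) ^ i / i ! := by
  refine ((expDecayOn_Gfun hg hδ i).abs_le_of_mem_Ioi (by positivity) hx).trans_eq ?_
  rw [mul_pow, ← exp_nat_mul]
  ring_nf

theorem abs_Hfun_le (hg : ExpDecayOn (g2 P) a C δ) (hδ : 0 < δ) (i : ℕ) {x : ℝ}
    (hx : x ∈ Ioi a) :
    |Hfun P i x| ≤ C / δ * exp (-δ * a) * ((C / δ ^ 2 * exp (-δ * a)) ^ i / i !) := by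
  refine ((expDecayOn_Hfun hg hδ i).abs_le_of_mem_Ioi (by positivity) hx).trans ?_
  have hC := hg.nonneg
  rw [mul_pow, ← exp_nat_mul,
    show -(δ + i * δ) * a = -δ * a + i * (-δ * a) by ring, exp_add]
  calc C * ((C / δ ^ 2) ^ i / i !) / (δ + i * δ) * (exp (-δ * a) * exp (i * (-δ * a)))
      = C * ((C / δ ^ 2) ^ i / i !) * exp (-δ * a) * exp (i * (-δ * a)) / (δ + i * δ) := by
        ring
    _ ≤ C * ((C / δ ^ 2) ^ i / i !) * exp (-δ * a) * exp (i * (-δ * a)) / δ :=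
        div_le_div_of_nonneg_left (by positivity) hδ (by nlinarith)
    _ = _ := by ring

end Iterates

theorem norm_mul_pow_succ_le {u M ρ r : ℝ} {i : ℕ} (hu : |u| ≤ M * (ρ ^ i / i !)) :
    ‖u * r ^ (i + 1)‖ ≤ M * |r| * ((ρ * |r|) ^ i / i !) := by
  rw [norm_mul, norm_pow, Real.norm_eq_abs, Real.norm_eq_abs, pow_succ]
  calc |u| * (|r| ^ i * |r|) ≤ M * (ρ ^ i / i !) * (|r| ^ i * |r|) := by gcongr
    _ = M * |r| * ((ρ * |r|) ^ i / i !) := by ring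

section Series

variable {P : ℕ → ℝ} {a C δ : ℝ}

theorem summable_Gfun_mul_pow (hg : ExpDecayOn (g2 P) a C δ) (hδ : 0 < δ) (r : ℝ) {x : ℝ}
    (hx : x ∈ Ioi a) : Summable fun n => Gfun P n x * r ^ n := by
  refine .of_norm_bounded (Real.summable_pow_div_factorial (C / δ ^ 2 * exp (-δ * a) * |r|))
    fun n => ?_
  rw [norm_mul, norm_pow, Real.norm_eq_abs, Real.norm_eq_abs, mul_pow, mul_div_right_comm]
  gcongr
  exact abs_Gfun_le hg hδ n hx

theorem hasDerivAt_tsum_Gfun (hg : ExpDecayOn (g2 P) a C δ) (hδ : 0 < δ) (r : ℝ) {x : ℝ}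
    (hx : x ∈ Ioi a) :
    HasDerivAt (fun y => ∑' n, Gfun P n y * r ^ n) (-∑' i, Hfun P i x * r ^ (i + 1)) x := by
  have hshift : ∀ y ∈ Ioi a,
      ∑' n, Gfun P n y * r ^ n = 1 + ∑' i, Gfun P (i + 1) y * r ^ (i + 1) := fun y hy => by
    rw [(summable_Gfun_mul_pow hg hδ r hy).tsum_eq_zero_add]
    simp [Gfun]
  have hderiv := hasDerivAt_tsum_of_isPreconnected
    (g := fun i y => Gfun P (i + 1) y * r ^ (i + 1))
    (g' := fun i y => -(Hfun P i y * r ^ (i + 1)))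
    ((Real.summable_pow_div_factorial _).mul_left _) isOpen_Ioi (convex_Ioi a).isPreconnected
    (fun i y hy => by simpa only [neg_mul] using (hasDerivAt_Gfun_succ hg hδ i hy).mul_const _)
    (fun i y hy => by rw [norm_neg]; exact norm_mul_pow_succ_le (abs_Hfun_le hg hδ i hy))
    hx ((summable_nat_add_iff 1).mpr (summable_Gfun_mul_pow hg hδ r hx)) hx
  rw [tsum_neg] at hderiv
  exact (hderiv.const_add 1).congr_of_eventuallyEq
    (eventually_of_mem (isOpen_Ioi.mem_nhds hx) hshift)

theorem hasDerivAt_tsum_Hfun (hg : ExpDecayOn (g2 P) a C δ) (hδ : 0 < δ) (r : ℝ) {x : ℝ}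
    (hx : x ∈ Ioi a) :
    HasDerivAt (fun y => ∑' i, Hfun P i y * r ^ (i + 1))
      (-(r * g2 P x * ∑' n, Gfun P n x * r ^ n)) x := by
  have hbound : ∀ i, ∀ y ∈ Ioi a,
      |g2 P y * Gfun P i y| ≤ C * exp (-δ * a) * ((C / δ ^ 2 * exp (-δ * a)) ^ i / i !) :=
    fun i y hy => (abs_mul _ _).trans_le <| mul_le_mul (hg.abs_le_of_mem_Ioi hδ.le hy)
      (abs_Gfun_le hg hδ i hy) (abs_nonneg _) (by have := hg.nonneg; positivity)
  have hderiv := hasDerivAt_tsum_of_isPreconnected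
    (g := fun i y => Hfun P i y * r ^ (i + 1))
    (g' := fun i y => -(g2 P y * Gfun P i y) * r ^ (i + 1))
    ((Real.summable_pow_div_factorial _).mul_left _) isOpen_Ioi (convex_Ioi a).isPreconnected
    (fun i y hy => (hasDerivAt_Hfun hg hδ i hy).mul_const _)
    (fun i y hy => by rw [neg_mul, norm_neg]; exact norm_mul_pow_succ_le (hbound i y hy))
    hx (.of_norm_bounded ((Real.summable_pow_div_factorial _).mul_left _)
      fun i => norm_mul_pow_succ_le (abs_Hfun_le hg hδ i hx)) hx
  refine hderiv.congr_deriv ?_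
  rw [← tsum_mul_left, ← tsum_neg]
  congr 1 with n
  ring

end Series

section EntireSeries

variable {b : ℕ → ℝ} {A q : ℝ}

theorem norm_mul_pow_div_factorial_le (hb : ∀ k, |b k| ≤ A * q ^ k) {z R : ℝ} (hz : |z| ≤ R)
    (k : ℕ) : ‖b k * z ^ k / (k ! : ℝ)‖ ≤ A * ((q * R) ^ k / k !) := by
  rw [Real.norm_eq_abs, abs_div, abs_mul, abs_pow, Nat.abs_cast]
  calc |b k| * |z| ^ k / k ! ≤ A * q ^ k * R ^ k / k ! := by
        gcongr
        · exact (abs_nonneg _).trans (hb k)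
        · exact hb k
    _ = A * ((q * R) ^ k / k !) := by ring

theorem abs_tsum_mul_pow_div_factorial_le (hb : ∀ k, |b k| ≤ A * q ^ k) (z : ℝ) :
    |∑' k, b k * z ^ k / k !| ≤ A * exp (q * |z|) := by
  rw [← Real.norm_eq_abs]
  refine tsum_of_norm_bounded ?_ (norm_mul_pow_div_factorial_le hb le_rfl)
  rw [Real.exp_eq_exp_ℝ]
  exact (NormedSpace.expSeries_div_hasSum_exp (q * |z|)).mul_left A

theorem continuous_tsum_mul_pow_div_factorial (hb : ∀ k, |b k| ≤ A * q ^ k) :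
    Continuous fun z => ∑' k, b k * z ^ k / k ! := by
  refine continuous_iff_continuousAt.mpr fun x => ?_
  have hx : x ∈ Metric.ball (0 : ℝ) (|x| + 1) := by
    rw [mem_ball_zero_iff, Real.norm_eq_abs]; linarith
  refine (continuousOn_tsum (fun k => by fun_prop)
    ((Real.summable_pow_div_factorial (q * (|x| + 1))).mul_left A) fun k z hz => ?_).continuousAt
    (Metric.isOpen_ball.mem_nhds hx)
  rw [mem_ball_zero_iff, Real.norm_eq_abs] at hz
  exact norm_mul_pow_div_factorial_le hb hz.le k

end EntireSeries

theorem le_tsum_mul_exp_mul_exp_neg_pow {p : ℕ → ℝ} (hp : ∀ k, 0 ≤ p k) {θ : ℝ}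
    (hM : Summable fun k : ℕ => p k * exp (θ * k)) (k : ℕ) :
    p k ≤ (∑' j : ℕ, p j * exp (θ * j)) * exp (-θ) ^ k := by
  calc p k = p k * exp (θ * k) * exp (-θ) ^ k := by
        rw [← exp_nat_mul, mul_assoc, ← exp_add]; ring_nf; simp
    _ ≤ (∑' j : ℕ, p j * exp (θ * j)) * exp (-θ) ^ k :=
        mul_le_mul_of_nonneg_right
          (hM.le_tsum k fun j _ => mul_nonneg (hp j) (exp_pos _).le) (by positivity)

theorem exists_expDecayOn_g2 {P : ℕ → ℝ} (hP : ∀ k, 0 ≤ P k) {θ : ℝ} (hθ : 0 < θ)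
    (hM : Summable fun k : ℕ => P k * exp (θ * k)) :
    ∃ C δ, 0 < δ ∧ ExpDecayOn (g2 P) (-1) C δ := by
  set q := exp (-θ)
  set A := (∑' j : ℕ, P j * exp (θ * j)) * q ^ 2
  have hq : q < 1 := exp_lt_one_iff.mpr (neg_lt_zero.mpr hθ)
  have hb : ∀ k, |P (k + 2)| ≤ A * q ^ k := fun k => by
    rw [abs_of_nonneg (hP _), mul_assoc, ← pow_add, add_comm 2]
    exact le_tsum_mul_exp_mul_exp_neg_pow hP hM (k + 2)
  have hA : 0 ≤ A := (abs_nonneg _).trans (by simpa using hb 0)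
  refine ⟨A * exp 2, 1 - q, sub_pos.mpr hq, ((continuous_exp.comp continuous_neg).mul
    (continuous_tsum_mul_pow_div_factorial hb)).continuousOn, fun z hz => ?_⟩
  have hexp : -z + q * |z| ≤ 2 + -(1 - q) * z := by
    have hz' : |z| ≤ z + 2 := abs_le.mpr ⟨by linarith [hz.out], by linarith⟩
    linarith [mul_le_of_le_one_left (sub_nonneg.mpr (le_abs_self z)) hq.le]
  calc |g2 P z| = exp (-z) * |∑' k, P (k + 2) * z ^ k / k !| := by
        rw [g2, abs_mul, abs_of_pos (exp_pos _)]
    _ ≤ exp (-z) * (A * exp (q * |z|)) := by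
        gcongr; exact abs_tsum_mul_pow_div_factorial_le hb z
    _ = A * exp (-z + q * |z|) := by rw [exp_add]; ring
    _ ≤ A * exp (2 + -(1 - q) * z) := by gcongr
    _ = A * exp 2 * exp (-(1 - q) * z) := by rw [exp_add]; ring

theorem stmt_7_general (P : ℕ → ℝ)
    (hPnonneg : ∀ k, 0 ≤ P k)
    (θ : ℝ) (hθ : 0 < θ)
    (hMθ : Summable fun k : ℕ => P k * Real.exp (θ * k))
    (β : ℝ) (hβ : β ≠ 0) :
    ∃ L' L'' : ℝ → ℝ,
      (∀ x ∈ Ici (0 : ℝ), HasDerivWithinAt (Lfun P β) (L' x) (Ici 0) x) ∧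
      ContinuousOn L' (Ici 0) ∧
      (∀ x ∈ Ici (0 : ℝ), HasDerivWithinAt L' (L'' x) (Ici 0) x) ∧
      ContinuousOn L'' (Ici 0) ∧
      (∀ x : ℝ, 0 < x → β * L'' x = -(g2 P x * Lfun P β x)) := by
  obtain ⟨C, δ, hδ, hg⟩ := exists_expDecayOn_g2 hPnonneg hθ hMθ
  have hIci : Ici (0 : ℝ) ⊆ Ioi (-1) := fun x hx => (show (-1 : ℝ) < 0 by norm_num).trans_le hx
  have hL : ∀ x ∈ Ici (0 : ℝ), HasDerivAt (Lfun P β) _ x :=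
    fun x hx => hasDerivAt_tsum_Gfun hg hδ (-1 / β) (hIci hx)
  have hL' := fun x (hx : x ∈ Ici (0 : ℝ)) => (hasDerivAt_tsum_Hfun hg hδ (-1 / β) (hIci hx)).neg
  refine ⟨fun x => -∑' i, Hfun P i x * (-1 / β) ^ (i + 1),
    fun x => -1 / β * g2 P x * Lfun P β x,
    fun x hx => (hL x hx).hasDerivWithinAt,
    fun x hx => (hL' x hx).continuousAt.continuousWithinAt,
    fun x hx => (hL' x hx).hasDerivWithinAt.congr_deriv (neg_neg _),
    fun x hx => ?_, fun x _ => by field_simp⟩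
  exact ((continuousAt_const.mul (hg.1.continuousAt (Ioi_mem_nhds (hIci hx)))).mul
    (hL x hx).continuousAt).continuousWithinAt

theorem stmt_7 (P : ℕ → ℝ)
    (hP0 : P 0 = 0) (hPnonneg : ∀ k, 0 ≤ P k) (hPsum : ∑' k, P k = 1)
    (hPmean : Summable fun k : ℕ => (k : ℝ) * P k) (hP1 : P 1 < 1)
    (θ : ℝ) (hθ : 0 < θ)
    (hMθ : Summable fun k : ℕ => P k * Real.exp (θ * k))
    (β : ℝ) (hβ : β ≠ 0) :
    ∃ L' L'' : ℝ → ℝ,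
      (∀ x ∈ Ici (0 : ℝ), HasDerivWithinAt (Lfun P β) (L' x) (Ici 0) x) ∧
      ContinuousOn L' (Ici 0) ∧
      (∀ x ∈ Ici (0 : ℝ), HasDerivWithinAt L' (L'' x) (Ici 0) x) ∧
      ContinuousOn L'' (Ici 0) ∧
      (∀ x : ℝ, 0 < x → β * L'' x = -(g2 P x * Lfun P β x)) :=
  stmt_7_general P hPnonneg θ hθ hMθ β hβ
end
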